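/- Game characterisation of generic bisimilarity with explicit divergence: for all x, y ∈ {o,b} and all states s, t, we have s ≈ed_{(x,y)} t if and only if s ≡ed_{E(x,y)} t. -/

import Mathlib

namespace GamesBisim

/-- Parameter values `o` (ordinary) and `b` (branching) for generic bisimulations. -/
inductive XY | o | b
deriving DecidableEq

/-- The faces ☹ (frown) and ☺ (smile). -/
inductive Face | frown | smile
deriving DecidableEq

/-- Rewards: `*` (star) and `✓` (check). -/
inductive Rw | star | check
deriving DecidableEq

/-- A labelled transition system with states `S`, actions `A` containing a
distinguished silent action `tau`, and a transition relation. -/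
structure LTS (S : Type u) (A : Type v) where
  tau : A
  Trans : S → A → S → Prop

namespace LTS

variable {S : Type u} {A : Type v}

/-- A single silent (τ) step. -/
def TauStep (L : LTS S A) (s s' : S) : Prop := L.Trans s L.tau s'

/-- `↠`: the reflexive-transitive closure of the τ-step relation. -/
def TauStar (L : LTS S A) : S → S → Prop := Relation.ReflTransGen L.TauStep

/-- `↠⁺`: the transitive closure of the τ-step relation. -/
def TauPlus (L : LTS S A) : S → S → Prop := Relation.TransGen L.TauStep

/-- An LTS is non-divergent if it admits no infinite sequence of τ-steps. -/
def NonDivergent (L : LTS S A) : Prop :=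
  ¬ ∃ f : ℕ → S, ∀ i, L.TauStep (f i) (f (i + 1))

/-- A symmetric relation `R` is a branching bisimulation. -/
def IsBranchingBisim (L : LTS S A) (R : S → S → Prop) : Prop :=
  (∀ s t, R s t → R t s) ∧
  ∀ s t a s', R s t → L.Trans s a s' →
    (a = L.tau ∧ R s' t) ∨
    ∃ t1 t', L.TauStar t t1 ∧ L.Trans t1 a t' ∧ R s t1 ∧ R s' t'

/-- Branching bisimilarity `≈b`. -/
def BranchingBisimilar (L : LTS S A) (s t : S) : Prop :=
  ∃ R, L.IsBranchingBisim R ∧ R s t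

/-- A symmetric relation `R` is a delay bisimulation. -/
def IsDelayBisim (L : LTS S A) (R : S → S → Prop) : Prop :=
  (∀ s t, R s t → R t s) ∧
  ∀ s t a s', R s t → L.Trans s a s' →
    (a = L.tau ∧ R s' t) ∨
    ∃ t1 t', L.TauStar t t1 ∧ L.Trans t1 a t' ∧ R s' t'

/-- The generalised weak transition `s ↠_{x,R,t} s'`: a weak transition `s ↠ s'`,
which in case `x = b` additionally satisfies `t R s` and `t R s'`. -/
def GenTauStar (L : LTS S A) (x : XY) (R : S → S → Prop) (t : S) (s s' : S) : Prop :=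
  L.TauStar s s' ∧ (x = XY.b → R t s ∧ R t s')

/-- The strong generalised weak transition `s ⟹_{x,R,t} s'`: a weak transition
`s ↠ s'`, which in case `x = b` is witnessed by a finite τ-path all of whose states
are related to `t` by `R`. -/
def SGenTauStar (L : LTS S A) (x : XY) (R : S → S → Prop) (t : S) (s s' : S) : Prop :=
  L.TauStar s s' ∧
  (x = XY.b → R t s ∧ Relation.ReflTransGen (fun u u' => L.TauStep u u' ∧ R t u') s s')

/-- A symmetric relation `R` is an `(x,y)`-generic bisimulation. -/
def IsGenBisim (L : LTS S A) (x y : XY) (R : S → S → Prop) : Prop :=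
  (∀ s t, R s t → R t s) ∧
  ∀ s t a s', R s t → L.Trans s a s' →
    (a = L.tau ∧ R s' t) ∨
    ∃ t1 t2 t', L.GenTauStar x R s t t1 ∧ L.Trans t1 a t2 ∧
      L.GenTauStar y R s' t2 t' ∧ R s' t'

/-- `(x,y)`-generic bisimilarity `≈_{(x,y)}`. -/
def GenBisimilar (L : LTS S A) (x y : XY) (s t : S) : Prop :=
  ∃ R, L.IsGenBisim x y R ∧ R s t

/-- A symmetric relation `R` is an `(x,y)`-generic bisimulation with explicit
divergence (divergence condition D₄). -/
def IsGenBisimED (L : LTS S A) (x y : XY) (R : S → S → Prop) : Prop :=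
  L.IsGenBisim x y R ∧
  ∀ s t, R s t → ∀ f : ℕ → S, f 0 = s → (∀ i, L.TauStep (f i) (f (i + 1))) →
    ∃ t' k, L.TauPlus t t' ∧ R (f k) t'

/-- `(x,y)`-generic bisimilarity with explicit divergence `≈ed_{(x,y)}`. -/
def GenBisimilarED (L : LTS S A) (x y : XY) (s t : S) : Prop :=
  ∃ R, L.IsGenBisimED x y R ∧ R s t

end LTS

/-- A relation `R` has the stuttering property: whenever
`t₀ →τ t₁ →τ ⋯ →τ t_k` and `t₀ R t_k`, then `t_i R t_j` for all `0 ≤ i,j ≤ k`. -/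
def StutteringProperty {S : Type u} {A : Type v} (L : LTS S A) (R : S → S → Prop) : Prop :=
  ∀ (k : ℕ) (t : ℕ → S),
    (∀ i < k, L.TauStep (t i) (t (i + 1))) → R (t 0) (t k) →
    ∀ i j, i ≤ k → j ≤ k → R (t i) (t j)

/-! ## Two-player games

A play is a maximal (finite or infinite) sequence of configurations connected by
moves, represented as `π : ℕ → Option C` which is `none` from the point (if any)
where the play has ended; a play may only end in a configuration whose owner is
stuck. A strategy for a player is a (positional) function `σ : C → C` which is
required to pick a legal move at every configuration owned by that player admitting
at least one move; a play is consistent with `σ` if every move taken from a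
configuration owned by that player follows `σ`. -/

section Games

variable {C : Type u}

/-- `π` is a maximal play of the game with move relation `move`. -/
def IsPlay (move : C → C → Prop) (π : ℕ → Option C) : Prop :=
  (∀ i c d, π i = some c → π (i + 1) = some d → move c d) ∧
  (∀ i c, π i = some c → π (i + 1) = none → ∀ d, ¬ move c d) ∧
  (∀ i, π i = none → π (i + 1) = none)

/-- The play `π` is consistent with strategy `σ` of the player owning the
configurations satisfying `owned`. -/
def ConsistentWith (owned : C → Prop) (σ : C → C) (π : ℕ → Option C) : Prop :=
  ∀ i c d, π i = some c → owned c → π (i + 1) = some d → d = σ c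

/-- `σ` is a valid strategy for the player owning the configurations satisfying
`owned`: it picks a legal move wherever a move exists. -/
def ValidStrategy (owned : C → Prop) (move : C → C → Prop) (σ : C → C) : Prop :=
  ∀ c, owned c → (∃ d, move c d) → move c (σ c)

/-- The play `π` is finite and ends in the configuration `c`. -/
def EndsAt (π : ℕ → Option C) (c : C) : Prop := ∃ i, π i = some c ∧ π (i + 1) = none

/-- The play `π` is infinite. -/
def InfinitePlay (π : ℕ → Option C) : Prop := ∀ i, π i ≠ none

/-- The Büchi winning condition on infinite plays: the play passes through
infinitely many configurations carrying a `✓` reward. -/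
def BuchiWin (reward : C → Prop) (π : ℕ → Option C) : Prop :=
  ∀ n, ∃ i, n ≤ i ∧ ∃ c, π i = some c ∧ reward c

/-- Duplicator wins the play `π`: either the play is finite and Spoiler is stuck,
or the play is infinite and satisfies the winning condition `infWin`. -/
def DupWinsPlay (dupOwned : C → Prop) (infWin : (ℕ → Option C) → Prop)
    (π : ℕ → Option C) : Prop :=
  (∃ c, EndsAt π c ∧ ¬ dupOwned c) ∨ (InfinitePlay π ∧ infWin π)

/-- Spoiler wins the play `π` (all plays not won by Duplicator). -/
def SpWinsPlay (dupOwned : C → Prop) (infWin : (ℕ → Option C) → Prop)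
    (π : ℕ → Option C) : Prop :=
  (∃ c, EndsAt π c ∧ dupOwned c) ∨ (InfinitePlay π ∧ ¬ infWin π)

/-- Duplicator wins the configuration `c`: she has a strategy winning all plays
starting in `c`. -/
def DupWins (dupOwned : C → Prop) (move : C → C → Prop)
    (infWin : (ℕ → Option C) → Prop) (c : C) : Prop :=
  ∃ σ : C → C, ValidStrategy dupOwned move σ ∧
    ∀ π, IsPlay move π → π 0 = some c → ConsistentWith dupOwned σ π →
      DupWinsPlay dupOwned infWin π

/-- Spoiler wins the configuration `c`: he has a strategy winning all plays
starting in `c`. -/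
def SpWins (dupOwned : C → Prop) (move : C → C → Prop)
    (infWin : (ℕ → Option C) → Prop) (c : C) : Prop :=
  ∃ σ : C → C, ValidStrategy (fun d => ¬ dupOwned d) move σ ∧
    ∀ π, IsPlay move π → π 0 = some c → ConsistentWith (fun d => ¬ dupOwned d) σ π →
      SpWinsPlay dupOwned infWin π

end Games

/-! ## The limited branching bisimulation (lbb) game -/

/-- Configurations of the lbb game: Spoiler-owned `⟨(s,t)⟩` and Duplicator-owned
`⟨(s,t),(a,s')⟩`. -/
inductive LConf (S : Type u) (A : Type v)
  | sp (p : S × S)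
  | dup (p : S × S) (c : A × S)

/-- Ownership in the lbb game. -/
def LConf.dupOwned {S : Type u} {A : Type v} : LConf S A → Prop
  | .sp _ => False
  | .dup _ _ => True

/-- Moves of the lbb game. -/
inductive LMove {S : Type u} {A : Type v} (L : LTS S A) : LConf S A → LConf S A → Prop
  | sp1 {s t a s'} (h : L.Trans s a s') :
      LMove L (LConf.sp (s, t)) (LConf.dup (s, t) (a, s'))
  | sp2 {s t a t'} (h : L.Trans t a t') :
      LMove L (LConf.sp (s, t)) (LConf.dup (t, s) (a, t'))
  | dup1 {u v u'} :
      LMove L (LConf.dup (u, v) (L.tau, u')) (LConf.sp (u', v))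
  | dup2 {u v a u' v'} (h : L.Trans v a v') :
      LMove L (LConf.dup (u, v) (a, u')) (LConf.sp (u', v'))
  | dup3 {u v a u' v'} (h : L.TauStep v v') :
      LMove L (LConf.dup (u, v) (a, u')) (LConf.sp (u, v'))

/-- `s ≡lb t`: Duplicator wins the lbb game from `⟨(s,t)⟩_S`; finite plays are won
by Duplicator iff Spoiler is stuck, and all infinite plays are won by Duplicator. -/
def LTS.lbbEquiv {S : Type u} {A : Type v} (L : LTS S A) (s t : S) : Prop :=
  DupWins LConf.dupOwned (LMove L) (fun _ => True) (LConf.sp (s, t))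

/-! ## The branching bisimulation (bb) game -/

/-- Configurations of the bb game: `⟨(s,t),c,r⟩` owned by Spoiler or Duplicator,
with challenge `c ∈ (A × S) ∪ {†}` (where `none` is `†`) and reward `r`. -/
inductive BConf (S : Type u) (A : Type v)
  | sp (p : S × S) (c : Option (A × S)) (r : Rw)
  | dup (p : S × S) (c : Option (A × S)) (r : Rw)

/-- Ownership in the bb game. -/
def BConf.dupOwned {S : Type u} {A : Type v} : BConf S A → Prop
  | .sp _ _ _ => False
  | .dup _ _ _ => True

/-- The configuration carries a `✓` reward. -/
def BConf.reward {S : Type u} {A : Type v} : BConf S A → Prop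
  | .sp _ _ r => r = Rw.check
  | .dup _ _ r => r = Rw.check

/-- Moves of the bb game. -/
inductive BMove {S : Type u} {A : Type v} (L : LTS S A) : BConf S A → BConf S A → Prop
  | sp1star {s t c r a s'} (h : L.Trans s a s') (hc : c = some (a, s') ∨ c = none) :
      BMove L (BConf.sp (s, t) c r) (BConf.dup (s, t) (some (a, s')) Rw.star)
  | sp1check {s t c r a s'} (h : L.Trans s a s')
      (hc : ¬(c = some (a, s') ∨ c = none)) :
      BMove L (BConf.sp (s, t) c r) (BConf.dup (s, t) (some (a, s')) Rw.check)
  | sp2 {s t c r a t'} (h : L.Trans t a t') :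
      BMove L (BConf.sp (s, t) c r) (BConf.dup (t, s) (some (a, t')) Rw.check)
  | dup1 {u v u' r} :
      BMove L (BConf.dup (u, v) (some (L.tau, u')) r) (BConf.sp (u', v) none Rw.check)
  | dup2 {u v a u' v' r} (h : L.Trans v a v') :
      BMove L (BConf.dup (u, v) (some (a, u')) r) (BConf.sp (u', v') none Rw.check)
  | dup3 {u v a u' v' r} (h : L.TauStep v v') :
      BMove L (BConf.dup (u, v) (some (a, u')) r)
        (BConf.sp (u, v') (some (a, u')) Rw.star)

/-- `s ≡b t`: Duplicator wins the bb game from `⟨(s,t),†,*⟩_S`, where infinite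
plays are won by Duplicator iff they yield infinitely many `✓` rewards. -/
def LTS.bbEquiv {S : Type u} {A : Type v} (L : LTS S A) (s t : S) : Prop :=
  DupWins BConf.dupOwned (BMove L) (BuchiWin BConf.reward) (BConf.sp (s, t) none Rw.star)

/-! ## The generic bisimulation (gb) game, and its explicit-divergence variant -/

/-- Configurations of the generic games: `⟨(s,t),c,m,r⟩` owned by Spoiler or
Duplicator, with challenge `c ∈ (A × S) ∪ {†}`, partial match
`m ∈ (S × {☹,☺}) ∪ {†}` and reward `r`. -/
inductive GConf (S : Type u) (A : Type v)
  | sp (p : S × S) (c : Option (A × S)) (m : Option (S × Face)) (r : Rw)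
  | dup (p : S × S) (c : Option (A × S)) (m : Option (S × Face)) (r : Rw)

/-- Ownership in the generic games. -/
def GConf.dupOwned {S : Type u} {A : Type v} : GConf S A → Prop
  | .sp _ _ _ _ => False
  | .dup _ _ _ _ => True

/-- The configuration carries a `✓` reward. -/
def GConf.reward {S : Type u} {A : Type v} : GConf S A → Prop
  | .sp _ _ _ r => r = Rw.check
  | .dup _ _ _ r => r = Rw.check

/-- Moves of the `E`-generic bisimulation game. The parameter `rw1` is the reward
handed out by Duplicator's rule (1): `✓` in the gb game, `*` in the gbed game. -/
inductive GMove {S : Type u} {A : Type v} (L : LTS S A) (E : Set Face) (rw1 : Rw) :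
    GConf S A → GConf S A → Prop
  | sp1 {s t c m r} (hc : c ≠ none) :
      GMove L E rw1 (GConf.sp (s, t) c m r) (GConf.dup (s, t) c m Rw.star)
  | sp2a {s t m r a s'} (h : L.Trans s a s') :
      GMove L E rw1 (GConf.sp (s, t) none m r)
        (GConf.dup (s, t) (some (a, s')) (some (t, Face.frown)) Rw.star)
  | sp2b {s t c m r a s'} (h : L.Trans s a s') (hc : c ≠ some (a, s')) :
      GMove L E rw1 (GConf.sp (s, t) c m r)
        (GConf.dup (s, t) (some (a, s')) (some (t, Face.frown)) Rw.check)
  | sp3 {s t c m r a t'} (h : L.Trans t a t') :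
      GMove L E rw1 (GConf.sp (s, t) c m r)
        (GConf.dup (t, s) (some (a, t')) (some (s, Face.frown)) Rw.check)
  | dup1 {u v u' vb f r} :
      GMove L E rw1 (GConf.dup (u, v) (some (L.tau, u')) (some (vb, f)) r)
        (GConf.sp (u', vb) none none rw1)
  | dup2a {u v a u' vb v' r} (h : L.Trans vb a v') :
      GMove L E rw1 (GConf.dup (u, v) (some (a, u')) (some (vb, Face.frown)) r)
        (GConf.sp (u', v') (some (a, u')) (some (v', Face.smile)) Rw.star)
  | dup2b {u v a u' vb v' r} (h : L.Trans vb a v') :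
      GMove L E rw1 (GConf.dup (u, v) (some (a, u')) (some (vb, Face.frown)) r)
        (GConf.sp (u', v') none none Rw.check)
  | dup2c {u v a u' vb v' r} (h : L.Trans vb a v') (hE : Face.smile ∈ E) :
      GMove L E rw1 (GConf.dup (u, v) (some (a, u')) (some (vb, Face.frown)) r)
        (GConf.sp (u, v) (some (a, u')) (some (v', Face.smile)) Rw.star)
  | dup3a {u v a u' vb f v' r} (h : L.TauStep vb v') :
      GMove L E rw1 (GConf.dup (u, v) (some (a, u')) (some (vb, f)) r)
        (GConf.sp (u, v') (some (a, u')) (some (v', f)) Rw.star)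
  | dup3b {u v a u' vb v' r} (h : L.TauStep vb v') :
      GMove L E rw1 (GConf.dup (u, v) (some (a, u')) (some (vb, Face.smile)) r)
        (GConf.sp (u', v') none none Rw.check)
  | dup3c {u v a u' vb f v' r} (h : L.TauStep vb v') (hE : f ∈ E) :
      GMove L E rw1 (GConf.dup (u, v) (some (a, u')) (some (vb, f)) r)
        (GConf.sp (u, v) (some (a, u')) (some (v', f)) Rw.star)

/-- `E(x,y) ⊆ {☹,☺}`: the smallest set containing `☹` when `x = o` and `☺` when
`y = o`. -/
def Exy (x y : XY) : Set Face :=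
  {f | (f = Face.frown ∧ x = XY.o) ∨ (f = Face.smile ∧ y = XY.o)}

/-- `s ≡_E t`: Duplicator wins the `E`-generic bisimulation game from
`⟨(s,t),†,†,*⟩_S`; infinite plays are won by Duplicator iff they yield infinitely
many `✓` rewards. -/
def LTS.gbEquiv {S : Type u} {A : Type v} (L : LTS S A) (E : Set Face) (s t : S) : Prop :=
  DupWins GConf.dupOwned (GMove L E Rw.check) (BuchiWin GConf.reward)
    (GConf.sp (s, t) none none Rw.star)

/-- `s ≡ed_E t`: Duplicator wins the `E`-generic bisimulation with explicit
divergence game from `⟨(s,t),†,†,*⟩_S`. -/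
def LTS.gbedEquiv {S : Type u} {A : Type v} (L : LTS S A) (E : Set Face) (s t : S) : Prop :=
  DupWins GConf.dupOwned (GMove L E Rw.star) (BuchiWin GConf.reward)
    (GConf.sp (s, t) none none Rw.star)

/-- The abstraction function `f(⟨(s,t),c,m,r⟩) = ⟨(s,t),c,r⟩` from configurations
of the generic game to configurations of the bb game, preserving ownership. -/
def fabs {S : Type u} {A : Type v} : GConf S A → BConf S A
  | .sp p c _ r => .sp p c r
  | .dup p c _ r => .dup p c r


universe u' v'

/-! ## Generic Büchi game theory -/

section Buchi

variable {C : Type u}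
variable (D : C → Prop) (M : C → C → Prop) (RW : C → Prop)

/-- Inductive "Duplicator can force reaching a reward-Z config or Spoiler stuck". -/
inductive RI (Z : Set C) : C → Prop
  | dupZ {c d} (hD : D c) (hM : M c d) (hr : RW d) (hz : d ∈ Z) : RI Z c
  | dupR {c d} (hD : D c) (hM : M c d) (h : RI Z d) : RI Z c
  | sp {c} (hD : ¬ D c) (h : ∀ d, M c d → ¬ (RW d ∧ d ∈ Z) → RI Z d) : RI Z c

variable {D M RW}

lemma RI_mono {Z Z' : Set C} (hZ : Z ⊆ Z') {c : C} (h : RI D M RW Z c) :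
    RI D M RW Z' c := by
  induction h with
  | dupZ hD hM hr hz => exact RI.dupZ hD hM hr (hZ hz)
  | dupR hD hM h ih => exact RI.dupR hD hM ih
  | sp hD h ih =>
    refine RI.sp hD fun d hd hn => ?_
    by_cases hzz : RW d ∧ d ∈ Z
    · exact absurd ⟨hzz.1, hZ hzz.2⟩ hn
    · exact ih d hd hzz

/-- convenient eliminations -/
lemma RI.dup' {Z : Set C} {c d : C} (hD : D c) (hM : M c d)
    (h : (RW d ∧ d ∈ Z) ∨ RI D M RW Z d) : RI D M RW Z c := by
  rcases h with ⟨hr, hz⟩ | h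
  · exact RI.dupZ hD hM hr hz
  · exact RI.dupR hD hM h

lemma RI.sp' {Z : Set C} {c : C} (hD : ¬ D c)
    (h : ∀ d, M c d → (RW d ∧ d ∈ Z) ∨ RI D M RW Z d) : RI D M RW Z c := by
  refine RI.sp hD fun d hd hn => ?_
  rcases h d hd with h' | h'
  · exact absurd h' hn
  · exact h'

variable (D M RW)

/-- The semantic winning set for Duplicator (greatest fixpoint). -/
def WinSet : Set C := {c | ∃ Z : Set C, (∀ z ∈ Z, RI D M RW Z z) ∧ c ∈ Z}

variable {D M RW}

lemma winSet_coind {Z : Set C} (h : ∀ z ∈ Z, RI D M RW Z z) : Z ⊆ WinSet D M RW :=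
  fun c hc => ⟨Z, h, hc⟩

lemma winSet_mem_RI {c : C} (h : c ∈ WinSet D M RW) : RI D M RW (WinSet D M RW) c := by
  obtain ⟨Z, hZ, hc⟩ := h
  exact RI_mono (winSet_coind hZ) (hZ c hc)

lemma RI_winSet_subset {c : C} (h : RI D M RW (WinSet D M RW) c) : c ∈ WinSet D M RW := by
  refine winSet_coind (Z := WinSet D M RW ∪ {c' | RI D M RW (WinSet D M RW) c'}) ?_
    (Or.inr h)
  rintro z (hz | hz)
  · exact RI_mono Set.subset_union_left (winSet_mem_RI hz)
  · exact RI_mono Set.subset_union_left hz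

/-! ### Ordinal-ranked reachability -/

variable (D M RW)

noncomputable def RIo (Z : Set C) : Ordinal.{u} → Set C :=
  WellFounded.fix Ordinal.lt_wf (fun o ih =>
    {c | (D c ∧ ∃ d, M c d ∧ ((RW d ∧ d ∈ Z) ∨ ∃ o', ∃ h : o' < o, d ∈ ih o' h)) ∨
         (¬ D c ∧ ∀ d, M c d → ((RW d ∧ d ∈ Z) ∨ ∃ o', ∃ h : o' < o, d ∈ ih o' h))})

lemma mem_RIo {Z : Set C} {o : Ordinal.{u}} {c : C} :
    c ∈ RIo D M RW Z o ↔
      ((D c ∧ ∃ d, M c d ∧ ((RW d ∧ d ∈ Z) ∨ ∃ o' < o, d ∈ RIo D M RW Z o')) ∨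
       (¬ D c ∧ ∀ d, M c d → ((RW d ∧ d ∈ Z) ∨ ∃ o' < o, d ∈ RIo D M RW Z o'))) := by
  conv_lhs => rw [RIo, WellFounded.fix_eq]
  simp only [exists_prop]
  rfl

variable {D M RW}

lemma RIo_RI {Z : Set C} {o : Ordinal.{u}} {c : C} (h : c ∈ RIo D M RW Z o) :
    RI D M RW Z c := by
  induction o using Ordinal.induction generalizing c with
  | h o ih =>
    rw [mem_RIo] at h
    rcases h with ⟨hD, d, hM, h⟩ | ⟨hD, h⟩
    · refine RI.dup' hD hM ?_
      rcases h with h | ⟨o', ho', hd⟩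
      · exact Or.inl h
      · exact Or.inr (ih o' ho' hd)
    · refine RI.sp' hD fun d hd => ?_
      rcases h d hd with h | ⟨o', ho', hdd⟩
      · exact Or.inl h
      · exact Or.inr (ih o' ho' hdd)

lemma RI_RIo {Z : Set C} {c : C} (h : RI D M RW Z c) :
    ∃ o : Ordinal.{u}, c ∈ RIo D M RW Z o := by
  induction h with
  | dupZ hD hM hr hz =>
    exact ⟨0, (mem_RIo D M RW).2 (Or.inl ⟨hD, _, hM, Or.inl ⟨hr, hz⟩⟩)⟩
  | dupR hD hM h ih =>
    obtain ⟨o, ho⟩ := ih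
    exact ⟨o + 1, (mem_RIo D M RW).2 (Or.inl ⟨hD, _, hM,
      Or.inr ⟨o, Order.lt_succ o, ho⟩⟩)⟩
  | @sp c hD h ih =>
    classical
    -- choose ranks for all successors
    let F : C → Ordinal.{u} := fun d =>
      if hd : ∃ o : Ordinal.{u}, d ∈ RIo D M RW Z o then hd.choose else 0
    refine ⟨(iSup F) + 1, (mem_RIo D M RW).2 (Or.inr ⟨hD, fun d hd => ?_⟩)⟩
    by_cases hz : RW d ∧ d ∈ Z
    · exact Or.inl hz
    · have hex : ∃ o : Ordinal.{u}, d ∈ RIo D M RW Z o := ih d hd hz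
      refine Or.inr ⟨F d, ?_, ?_⟩
      · exact lt_of_le_of_lt (le_ciSup (Ordinal.bddAbove_range F) d) (Order.lt_succ _)
      · simpa only [F, dif_pos hex] using hex.choose_spec

/-! ### Duplicator's positional strategy and Theorem A -/

variable (D M RW)

noncomputable def rkW (c : C) : Ordinal.{u} :=
  sInf {o | c ∈ RIo D M RW (WinSet D M RW) o}

def GdA (c : C) : Prop :=
  ∃ d, M c d ∧ ((RW d ∧ d ∈ WinSet D M RW) ∨
    ∃ o < rkW D M RW c, d ∈ RIo D M RW (WinSet D M RW) o)

open Classical in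
noncomputable def sigA (c : C) : C :=
  if h : GdA D M RW c then h.choose
  else if h2 : ∃ d, M c d then h2.choose else c

variable {D M RW}

lemma GdA_of {c : C} (hD : D c)
    (h : ∃ o : Ordinal.{u}, c ∈ RIo D M RW (WinSet D M RW) o) : GdA D M RW c := by
  have hmem : c ∈ RIo D M RW (WinSet D M RW) (rkW D M RW c) := csInf_mem h
  rw [mem_RIo] at hmem
  rcases hmem with ⟨_, d, hM, hh⟩ | ⟨hnD, _⟩
  · exact ⟨d, hM, hh⟩
  · exact absurd hD hnD

lemma sigA_valid : ValidStrategy D M (sigA D M RW) := by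
  classical
  intro c _ hm
  unfold sigA
  split
  · next h => exact h.choose_spec.1
  · exact hm.choose_spec

lemma sigA_spec {c : C} (hD : D c)
    (h : ∃ o : Ordinal.{u}, c ∈ RIo D M RW (WinSet D M RW) o) :
    M c (sigA D M RW c) ∧
      ((RW (sigA D M RW c) ∧ sigA D M RW c ∈ WinSet D M RW) ∨
        ∃ o < rkW D M RW c, sigA D M RW c ∈ RIo D M RW (WinSet D M RW) o) := by
  classical
  have hg := GdA_of hD h
  unfold sigA
  rw [dif_pos hg]
  exact hg.choose_spec

/-- Theorem A: the semantic winning set is contained in Duplicator's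
positional-strategy winning set. -/
theorem winSet_dupWins {c₀ : C} (h : c₀ ∈ WinSet D M RW) :
    DupWins D M (BuchiWin RW) c₀ := by
  classical
  refine ⟨sigA D M RW, sigA_valid, ?_⟩
  intro π hplay h0 hcons
  have hW0 : ∃ o : Ordinal.{u}, c₀ ∈ RIo D M RW (WinSet D M RW) o :=
    RI_RIo (winSet_mem_RI h)
  have INV : ∀ i c, π i = some c →
      ∃ o : Ordinal.{u}, c ∈ RIo D M RW (WinSet D M RW) o := by
    intro i
    induction i with
    | zero =>
      intro c hc
      rw [h0] at hc
      cases hc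
      exact hW0
    | succ i ih =>
      intro d hd
      obtain ⟨c, hc⟩ : ∃ c, π i = some c := by
        cases hπi : π i with
        | none => rw [hplay.2.2 i hπi] at hd; cases hd
        | some c => exact ⟨c, rfl⟩
      obtain ⟨o, ho⟩ := ih c hc
      by_cases hD : D c
      · have hds := hcons i c d hc hD hd
        rcases (sigA_spec hD ⟨o, ho⟩).2 with ⟨_, hw⟩ | ⟨o', _, ho'⟩
        · exact hds ▸ RI_RIo (winSet_mem_RI hw)
        · exact hds ▸ ⟨o', ho'⟩
      · have hM := hplay.1 i c d hc hd
        have hmem : c ∈ RIo D M RW (WinSet D M RW) (rkW D M RW c) :=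
          csInf_mem (s := {o : Ordinal.{u} | c ∈ RIo D M RW (WinSet D M RW) o}) ⟨o, ho⟩
        rw [mem_RIo] at hmem
        rcases hmem with ⟨hD', _⟩ | ⟨_, hall⟩
        · exact absurd hD' hD
        rcases hall d hM with ⟨_, hw⟩ | ⟨o', _, ho'⟩
        · exact RI_RIo (winSet_mem_RI hw)
        · exact ⟨o', ho'⟩
  by_cases hfin : ∃ i, π i = none
  · left
    have hk : π (Nat.find hfin) = none := Nat.find_spec hfin
    have hkpos : Nat.find hfin ≠ 0 := by
      intro h'
      rw [h', h0] at hk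
      cases hk
    obtain ⟨j, hj⟩ : ∃ j, Nat.find hfin = j + 1 := Nat.exists_eq_succ_of_ne_zero hkpos
    have hjn : π (j+1) = none := hj ▸ hk
    have hjs : π j ≠ none := Nat.find_min hfin (by omega)
    obtain ⟨c, hc⟩ := Option.ne_none_iff_exists'.1 hjs
    refine ⟨c, ⟨j, hc, hjn⟩, ?_⟩
    intro hD
    obtain ⟨o, ho⟩ := INV j c hc
    exact hplay.2.1 j c hc hjn _ (sigA_spec hD ⟨o, ho⟩).1
  · push_neg at hfin
    right
    refine ⟨hfin, ?_⟩
    have HIT : ∀ (o : Ordinal.{u}), ∀ c i, rkW D M RW c = o →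
        π i = some c → (∃ o' : Ordinal.{u}, c ∈ RIo D M RW (WinSet D M RW) o') →
        ∃ j, i < j ∧ ∃ c', π j = some c' ∧ RW c' ∧ c' ∈ WinSet D M RW := by
      intro o
      induction o using Ordinal.induction with
      | h o ihh =>
        intro c i hrk hc hex
        obtain ⟨d, hd⟩ := Option.ne_none_iff_exists'.1 (hfin (i+1))
        by_cases hD : D c
        · have hds := hcons i c d hc hD hd
          rcases (sigA_spec hD hex).2 with ⟨hr, hw⟩ | ⟨o', ho', hd'⟩
          · exact ⟨i+1, Nat.lt_succ_self i, d, hd, hds ▸ ⟨hr, hw⟩⟩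
          · have hlt : rkW D M RW d < o := by
              have h1 : rkW D M RW d ≤ o' := by
                apply csInf_le (OrderBot.bddBelow _)
                exact hds ▸ hd'
              exact lt_of_le_of_lt h1 (hrk ▸ ho')
            obtain ⟨j, hj, rest⟩ := ihh _ hlt d (i+1) rfl hd ⟨o', hds ▸ hd'⟩
            exact ⟨j, lt_trans (Nat.lt_succ_self i) hj, rest⟩
        · have hM := hplay.1 i c d hc hd
          have hmem : c ∈ RIo D M RW (WinSet D M RW) (rkW D M RW c) :=
            csInf_mem (s := {o : Ordinal.{u} | c ∈ RIo D M RW (WinSet D M RW) o}) hex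
          rw [mem_RIo] at hmem
          rcases hmem with ⟨hD', _⟩ | ⟨_, hall⟩
          · exact absurd hD' hD
          rcases hall d hM with ⟨hr, hw⟩ | ⟨o', ho', hd'⟩
          · exact ⟨i+1, Nat.lt_succ_self i, d, hd, hr, hw⟩
          · have hlt : rkW D M RW d < o := by
              have h1 : rkW D M RW d ≤ o' := csInf_le (OrderBot.bddBelow _) hd'
              exact lt_of_le_of_lt h1 (hrk ▸ ho')
            obtain ⟨j, hj, rest⟩ := ihh _ hlt d (i+1) rfl hd ⟨o', hd'⟩
            exact ⟨j, lt_trans (Nat.lt_succ_self i) hj, rest⟩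
    intro n
    obtain ⟨c, hc⟩ := Option.ne_none_iff_exists'.1 (hfin n)
    obtain ⟨j, hj, c', rest⟩ := HIT _ c n rfl hc (INV n c hc)
    exact ⟨j, le_of_lt hj, c', rest.1, rest.2.1⟩

/-! ### Theorem B: winning implies membership in the semantic winning set -/

variable (D M RW)

/-- The outer operator. -/
def outOp : Set C →o Set C :=
  ⟨fun Z => {c | RI D M RW Z c}, fun Z Z' hZ c hc => RI_mono hZ hc⟩

lemma winSet_eq_gfp : WinSet D M RW = OrderHom.gfp (outOp D M RW) := by
  apply le_antisymm
  · exact (outOp D M RW).le_gfp (fun c hc => winSet_mem_RI hc)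
  · intro c hc
    refine ⟨OrderHom.gfp (outOp D M RW), ?_, hc⟩
    intro z hz
    have := (outOp D M RW).map_gfp
    rw [← this] at hz
    exact hz

noncomputable def Zap (β : Ordinal.{u}) : Set C :=
  OrdinalApprox.gfpApprox (outOp D M RW) ⊤ β

lemma mem_Zap_iff {β : Ordinal.{u}} {c : C} :
    c ∈ Zap D M RW β ↔ ∀ β' < β, RI D M RW (Zap D M RW β') c := by
  unfold Zap
  conv_lhs => rw [OrdinalApprox.gfpApprox]
  simp only [Set.top_eq_univ, Set.inf_eq_inter, Set.univ_inter, Set.iInf_eq_iInter, Set.mem_iInter]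
  exact Iff.rfl

lemma winSet_eq_Zap_top :
    Zap D M RW (Order.succ (Cardinal.mk (Set C))).ord = WinSet D M RW := by
  unfold Zap
  rw [OrdinalApprox.gfpApprox_ord_eq_gfp, winSet_eq_gfp]

variable {D M RW}

lemma exists_budget {c : C} (h : c ∉ WinSet D M RW) :
    ∃ β : Ordinal.{u}, ¬ RI D M RW (Zap D M RW β) c := by
  rw [← winSet_eq_Zap_top D M RW] at h
  rw [mem_Zap_iff] at h
  push_neg at h
  obtain ⟨β, _, hβ⟩ := h
  exact ⟨β, hβ⟩

lemma drop_budget {d : C} {β : Ordinal.{u}} (h1 : RW d → d ∉ Zap D M RW β)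
    (h2 : ¬ RI D M RW (Zap D M RW β) d) :
    ∃ β' ≤ β, ¬ RI D M RW (Zap D M RW β') d ∧ (RW d → β' < β) := by
  by_cases hr : RW d
  · have hz : d ∉ Zap D M RW β := h1 hr
    rw [mem_Zap_iff] at hz
    push_neg at hz
    obtain ⟨β', hβ', hri⟩ := hz
    exact ⟨β', le_of_lt hβ', hri, fun _ => hβ'⟩
  · exact ⟨β, le_rfl, h2, fun hr' => absurd hr' hr⟩

lemma dup_next {c : C} {β : Ordinal.{u}} (h : ¬ RI D M RW (Zap D M RW β) c)
    (hD : D c) {d : C} (hM : M c d) :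
    ∃ β' ≤ β, ¬ RI D M RW (Zap D M RW β') d ∧ (RW d → β' < β) := by
  have h1 : ¬ ((RW d ∧ d ∈ Zap D M RW β) ∨ RI D M RW (Zap D M RW β) d) :=
    fun hh => h (RI.dup' hD hM hh)
  rw [not_or] at h1
  exact drop_budget (fun hr hz => h1.1 ⟨hr, hz⟩) h1.2

lemma sp_next {c : C} {β : Ordinal.{u}} (h : ¬ RI D M RW (Zap D M RW β) c)
    (hS : ¬ D c) :
    ∃ d, M c d ∧ ∃ β' ≤ β, ¬ RI D M RW (Zap D M RW β') d ∧ (RW d → β' < β) := by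
  have h1 : ¬ ∀ d, M c d → ((RW d ∧ d ∈ Zap D M RW β) ∨ RI D M RW (Zap D M RW β) d) :=
    fun hall => h (RI.sp' hS hall)
  push_neg at h1
  obtain ⟨d, hd, hn⟩ := h1
  exact ⟨d, hd, drop_budget hn.1 hn.2⟩

variable (D M RW)

/-- States of Spoiler's punishing construction. -/
def BSt : Type (max u (u+1)) :=
  Σ' (c : C) (β : Ordinal.{u}), ¬ RI D M RW (Zap D M RW β) c

variable {D M RW}

open Classical in
noncomputable def stepB (σ : C → C) (hσ : ValidStrategy D M σ)
    (p : BSt D M RW) : Option (BSt D M RW) :=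
  if hD : D p.1 then
    if hm : ∃ d, M p.1 d then
      some ⟨σ p.1, (dup_next p.2.2 hD (hσ p.1 hD hm)).choose,
        (dup_next p.2.2 hD (hσ p.1 hD hm)).choose_spec.2.1⟩
    else none
  else
    some ⟨(sp_next p.2.2 hD).choose,
      (sp_next p.2.2 hD).choose_spec.2.choose,
      (sp_next p.2.2 hD).choose_spec.2.choose_spec.2.1⟩

lemma stepB_none {σ hσ} {p : BSt D M RW} (h : stepB σ hσ p = none) :
    D p.1 ∧ ∀ d, ¬ M p.1 d := by
  classical
  unfold stepB at h
  by_cases hD : D p.1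
  · rw [dif_pos hD] at h
    by_cases hm : ∃ d, M p.1 d
    · rw [dif_pos hm] at h; cases h
    · push_neg at hm; exact ⟨hD, hm⟩
  · rw [dif_neg hD] at h; cases h

lemma stepB_some {σ hσ} {p q : BSt D M RW} (h : stepB σ hσ p = some q) :
    M p.1 q.1 ∧ q.2.1 ≤ p.2.1 ∧ (RW q.1 → q.2.1 < p.2.1) ∧ (D p.1 → q.1 = σ p.1) := by
  classical
  unfold stepB at h
  by_cases hD : D p.1
  · rw [dif_pos hD] at h
    by_cases hm : ∃ d, M p.1 d
    · rw [dif_pos hm] at h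
      cases h
      have hspec := (dup_next p.2.2 hD (hσ p.1 hD hm)).choose_spec
      exact ⟨hσ p.1 hD hm, hspec.1, fun hr => hspec.2.2 hr, fun _ => rfl⟩
    · rw [dif_neg hm] at h; cases h
  · rw [dif_neg hD] at h
    cases h
    have hs1 := (sp_next p.2.2 hD).choose_spec
    have hs2 := hs1.2.choose_spec
    exact ⟨hs1.1, hs2.1, fun hr => hs2.2.2 hr, fun hD' => absurd hD' hD⟩

noncomputable def chainB (σ : C → C) (hσ : ValidStrategy D M σ)
    (p₀ : BSt D M RW) : ℕ → Option (BSt D M RW)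
  | 0 => some p₀
  | n + 1 => (chainB σ hσ p₀ n).bind (stepB σ hσ)

lemma no_ordinal_descent {g : ℕ → Ordinal.{u}} (h : ∀ n, g (n + 1) < g n) : False := by
  have key : ∀ o : Ordinal.{u}, ∀ n, g n = o → False := by
    intro o
    induction o using Ordinal.induction with
    | h o ih =>
      intro n hn
      exact ih (g (n+1)) (hn ▸ h n) (n+1) rfl
  exact key (g 0) 0 rfl

/-- Theorem B: if Duplicator wins, the start is in the semantic winning set. -/
theorem dupWins_winSet {c₀ : C} (h : DupWins D M (BuchiWin RW) c₀) :
    c₀ ∈ WinSet D M RW := by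
  classical
  by_contra hW
  obtain ⟨σ, hσ, hwin⟩ := h
  obtain ⟨β₀, hβ₀⟩ := exists_budget hW
  set p₀ : BSt D M RW := ⟨c₀, β₀, hβ₀⟩ with hp₀
  set ch := chainB σ hσ p₀ with hch
  set π : ℕ → Option C := fun n => (ch n).map (·.1) with hπ
  have hbind : ∀ n, ch (n+1) = (ch n).bind (stepB σ hσ) := fun n => rfl
  have hchsome : ∀ {n c}, π n = some c → ∃ p, ch n = some p ∧ p.1 = c := by
    intro n c hc
    have hc' : (ch n).map (·.1) = some c := hc
    obtain ⟨p, hp, hpc⟩ := Option.map_eq_some_iff.1 hc'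
    exact ⟨p, hp, hpc⟩
  have hstep : ∀ {n p q}, ch n = some p → ch (n+1) = some q →
      stepB σ hσ p = some q := by
    intro n p q hp hq
    rw [hbind n, hp] at hq
    exact hq
  have hplay : IsPlay M π := by
    refine ⟨?_, ?_, ?_⟩
    · intro i c d hc hd
      obtain ⟨p, hp, hpc⟩ := hchsome hc
      obtain ⟨q, hq, hqd⟩ := hchsome hd
      have h1 := (stepB_some (hstep hp hq)).1
      rw [hpc, hqd] at h1
      exact h1
    · intro i c hc hnone d
      obtain ⟨p, hp, hpc⟩ := hchsome hc
      have hn2 : ch (i+1) = none := Option.map_eq_none_iff.1 hnone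
      rw [hbind i, hp] at hn2
      have hn3 : stepB σ hσ p = none := hn2
      have h2 := stepB_none hn3
      rw [hpc] at h2
      exact h2.2 d
    · intro i hnone
      have hn2 : ch i = none := Option.map_eq_none_iff.1 hnone
      show (ch (i+1)).map (·.1) = none
      rw [hbind i, hn2]
      rfl
  have h0 : π 0 = some c₀ := rfl
  have hcons : ConsistentWith D σ π := by
    intro i c d hc hDc hd
    obtain ⟨p, hp, hpc⟩ := hchsome hc
    obtain ⟨q, hq, hqd⟩ := hchsome hd
    have h4 := (stepB_some (hstep hp hq)).2.2.2
    rw [hpc] at h4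
    rw [hqd] at h4
    exact h4 hDc
  have hDW := hwin π hplay h0 hcons
  rcases hDW with ⟨c, ⟨i, hc, hnone⟩, hnD⟩ | ⟨hinf, hB⟩
  · obtain ⟨p, hp, hpc⟩ := hchsome hc
    have hn2 : ch (i+1) = none := Option.map_eq_none_iff.1 hnone
    rw [hbind i, hp] at hn2
    have hn3 : stepB σ hσ p = none := hn2
    have h2 := stepB_none hn3
    rw [hpc] at h2
    exact hnD h2.1
  · -- infinite play with Buchi condition: budget descent
    have hallsome : ∀ n, ∃ p, ch n = some p := by
      intro n
      have h5 := hinf n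
      cases hcn : ch n with
      | none =>
        exfalso
        apply h5
        show (ch n).map (·.1) = none
        rw [hcn]
        rfl
      | some p => exact ⟨p, rfl⟩
    set bs : ℕ → Ordinal.{u} := fun n => ((hallsome n).choose).2.1 with hbs
    have hbs_le : ∀ n, bs (n+1) ≤ bs n := by
      intro n
      have hp := (hallsome n).choose_spec
      have hq := (hallsome (n+1)).choose_spec
      exact (stepB_some (hstep hp hq)).2.1
    have hbs_anti : ∀ {m n}, m ≤ n → bs n ≤ bs m := by
      intro m n hmn
      induction n with
      | zero => cases Nat.le_zero.mp hmn; exact le_rfl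
      | succ n ih =>
        rcases Nat.lt_or_ge m (n+1) with hlt | hge
        · exact le_trans (hbs_le n) (ih (Nat.lt_succ_iff.mp hlt))
        · have : m = n + 1 := le_antisymm hmn hge
          subst this
          exact le_rfl
    have hbs_lt : ∀ n c, π (n+1) = some c → RW c → bs (n+1) < bs n := by
      intro n c hc hr
      have hp := (hallsome n).choose_spec
      have hq := (hallsome (n+1)).choose_spec
      obtain ⟨q, hq', hqc⟩ := hchsome hc
      have hqq : (hallsome (n+1)).choose = q := by
        rw [hq] at hq'
        exact Option.some.inj hq'
      have h5 := (stepB_some (hstep hp hq)).2.2.1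
      apply h5
      rw [hqq, hqc]
      exact hr
    -- build check positions
    have hnext : ∀ n, ∃ i, n + 1 ≤ i ∧ ∃ c, π i = some c ∧ RW c := fun n => hB (n+1)
    set f : ℕ → ℕ := fun n => Nat.rec 0 (fun m fm => (hnext fm).choose) n with hf
    have hf_succ : ∀ n, f (n+1) = (hnext (f n)).choose := fun n => rfl
    have hf_spec : ∀ n, f n + 1 ≤ f (n+1) ∧ ∃ c, π (f (n+1)) = some c ∧ RW c := by
      intro n
      rw [hf_succ n]
      exact ⟨((hnext (f n)).choose_spec).1, ((hnext (f n)).choose_spec).2⟩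
    refine no_ordinal_descent (g := fun n => bs (f (n+1))) ?_
    intro n
    obtain ⟨hge, c, hc, hr⟩ := hf_spec (n+1)
    obtain ⟨k, hk⟩ : ∃ k, f (n+1+1) = k + 1 := ⟨f (n+1+1) - 1, by omega⟩
    have h1 : bs (f (n+1+1)) < bs k := by
      rw [hk] at hc ⊢
      exact hbs_lt k c hc hr
    have h2 : bs k ≤ bs (f (n+1)) := hbs_anti (by omega)
    exact lt_of_lt_of_le h1 h2

end Buchi



/-! ## Relation theory: the largest semi-generic bisimulation with explicit divergence -/

section RelTheory

variable {S : Type u} {A : Type v} (L : LTS S A) (x y : XY)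

/-- The divergence condition D₄ as a standalone predicate. -/
def DivCond (R : S → S → Prop) : Prop :=
  ∀ s t, R s t → ∀ f : ℕ → S, f 0 = s → (∀ i, L.TauStep (f i) (f (i + 1))) →
    ∃ t' k, L.TauPlus t t' ∧ R (f k) t'

/-- The "real match" clause of the generic transfer condition. -/
def Clause2 (R : S → S → Prop) (s t : S) (a : A) (s' : S) : Prop :=
  ∃ t1 t2 t', L.GenTauStar x R s t t1 ∧ L.Trans t1 a t2 ∧
    L.GenTauStar y R s' t2 t' ∧ R s' t'

/-- The relaxed (semi) first clause. -/
def SemiClause1 (R : S → S → Prop) (s t : S) (a : A) (s' : S) : Prop :=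
  a = L.tau ∧ ∃ th, L.TauStar t th ∧ R s' th ∧ (x = XY.b → R s th)

/-- Semi-generic bisimulations with explicit divergence. -/
def IsSemi (R : S → S → Prop) : Prop :=
  (∀ s t, R s t → R t s) ∧
  (∀ s t a s', R s t → L.Trans s a s' →
    SemiClause1 L x R s t a s' ∨ Clause2 L x y R s t a s') ∧
  DivCond L R

/-- The largest semi-generic bisimulation with explicit divergence. -/
def Bm : S → S → Prop := fun s t => ∃ R, IsSemi L x y R ∧ R s t

variable {L x y}

lemma gts_mono {R R' : S → S → Prop} (hRR : ∀ a b, R a b → R' a b)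
    {z : XY} {s t t1 : S} (h : L.GenTauStar z R s t t1) : L.GenTauStar z R' s t t1 :=
  ⟨h.1, fun hz => ⟨hRR _ _ (h.2 hz).1, hRR _ _ (h.2 hz).2⟩⟩

lemma Clause2.mono {R R' : S → S → Prop} (hRR : ∀ a b, R a b → R' a b)
    {s t a s'} (h : Clause2 L x y R s t a s') : Clause2 L x y R' s t a s' := by
  obtain ⟨t1, t2, t', h1, h2, h3, h4⟩ := h
  exact ⟨t1, t2, t', gts_mono hRR h1, h2, gts_mono hRR h3, hRR _ _ h4⟩

lemma SemiClause1.mono {R R' : S → S → Prop} (hRR : ∀ a b, R a b → R' a b)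
    {s t a s'} (h : SemiClause1 L x R s t a s') : SemiClause1 L x R' s t a s' := by
  obtain ⟨ha, th, h1, h2, h3⟩ := h
  exact ⟨ha, th, h1, hRR _ _ h2, fun hx => hRR _ _ (h3 hx)⟩

lemma isSemi_Bm : IsSemi L x y (Bm L x y) := by
  refine ⟨?_, ?_, ?_⟩
  · rintro s t ⟨R, hR, hst⟩
    exact ⟨R, hR, hR.1 s t hst⟩
  · rintro s t a s' ⟨R, hR, hst⟩ htr
    have hsub : ∀ a b, R a b → Bm L x y a b := fun a b h => ⟨R, hR, h⟩
    rcases hR.2.1 s t a s' hst htr with h | h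
    · exact Or.inl (h.mono hsub)
    · exact Or.inr (h.mono hsub)
  · rintro s t ⟨R, hR, hst⟩ f hf0 hdiv
    have hsub : ∀ a b, R a b → Bm L x y a b := fun a b h => ⟨R, hR, h⟩
    obtain ⟨t', k, h1, h2⟩ := hR.2.2 s t hst f hf0 hdiv
    exact ⟨t', k, h1, hsub _ _ h2⟩

lemma isSemi_of_genED {R : S → S → Prop} (h : L.IsGenBisimED x y R) :
    IsSemi L x y R := by
  refine ⟨h.1.1, ?_, h.2⟩
  intro s t a s' hst htr
  rcases h.1.2 s t a s' hst htr with ⟨ha, h'⟩ | ⟨t1, t2, t', h1, h2, h3, h4⟩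
  · exact Or.inl ⟨ha, t, Relation.ReflTransGen.refl, h', fun _ => hst⟩
  · exact Or.inr ⟨t1, t2, t', h1, h2, h3, h4⟩

lemma Bm_sym {s t : S} (h : Bm L x y s t) : Bm L x y t s :=
  isSemi_Bm.1 s t h

lemma Bm_step {s t : S} {a : A} {s' : S} (h : Bm L x y s t) (htr : L.Trans s a s') :
    SemiClause1 L x (Bm L x y) s t a s' ∨ Clause2 L x y (Bm L x y) s t a s' :=
  isSemi_Bm.2.1 s t a s' h htr

lemma Bm_div : DivCond L (Bm L x y) := isSemi_Bm.2.2

/-- Simulation of a τ-path on the other side. -/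
lemma Bm_sim {t th u : S} (hts : L.TauStar t th) (h : Bm L x y t u) :
    ∃ uh, L.TauStar u uh ∧ Bm L x y th uh := by
  induction hts with
  | refl => exact ⟨u, Relation.ReflTransGen.refl, h⟩
  | tail hab hbc ih =>
    obtain ⟨uh, huh, hbm⟩ := ih
    rcases Bm_step hbm hbc with ⟨_, wh, h1, h2, _⟩ | ⟨t1, t2, t', h1, h2, h3, h4⟩
    · exact ⟨wh, huh.trans h1, h2⟩
    · refine ⟨t', huh.trans (h1.1.trans ?_), h4⟩
      exact (Relation.ReflTransGen.single h2).trans h3.1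

/-- Common-partner interpolation pairs. -/
def CP (z q : S) : Prop :=
  ∃ p0 pk, Bm L x y z p0 ∧ L.TauStar p0 q ∧ L.TauStar q pk ∧ Bm L x y z pk

variable (L x y)

def BmCl : S → S → Prop := fun u v => Bm L x y u v ∨ CP (L := L) (x := x) (y := y) u v ∨ CP (L := L) (x := x) (y := y) v u

variable {L x y}

lemma Bm_le_BmCl : ∀ a b, Bm L x y a b → BmCl L x y a b := fun _ _ h => Or.inl h

lemma BmCl_semi : IsSemi L x y (BmCl L x y) := by
  constructor
  · rintro s t (h | h | h)
    · exact Or.inl (Bm_sym h)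
    · exact Or.inr (Or.inr h)
    · exact Or.inr (Or.inl h)
  constructor
  · rintro s t a s' (h | h | h) htr
    · rcases Bm_step h htr with h' | h'
      · exact Or.inl (h'.mono Bm_le_BmCl)
      · exact Or.inr (h'.mono Bm_le_BmCl)
    · -- pair (s,t) with CP s t : challenge on the common partner side s
      obtain ⟨p0, pk, hzp0, hp0q, hqpk, hzpk⟩ := h
      rcases Bm_step hzpk htr with ⟨ha, th, h1, h2, h3⟩ | ⟨t1, t2, t', h1, h2, h3, h4⟩
      · exact Or.inl ⟨ha, th, hqpk.trans h1, Or.inl h2, fun hx => Or.inl (h3 hx)⟩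
      · refine Or.inr ⟨t1, t2, t', ⟨hqpk.trans h1.1, fun hx => ?_⟩, h2,
          gts_mono Bm_le_BmCl h3, Or.inl h4⟩
        exact ⟨Or.inr (Or.inl ⟨p0, pk, hzp0, hp0q, hqpk, hzpk⟩), Or.inl ((h1.2 hx).2)⟩
    · -- pair (s,t) with CP t s : challenge on the interior side s
      obtain ⟨p0, pk, hzp0, hp0q, hqpk, hzpk⟩ := h
      obtain ⟨w, hzw, hqw⟩ := Bm_sim hp0q (Bm_sym hzp0)
      rcases Bm_step hqw htr with ⟨ha, th, h1, h2, h3⟩ | ⟨t1, t2, t', h1, h2, h3, h4⟩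
      · exact Or.inl ⟨ha, th, hzw.trans h1, Or.inl h2, fun hx => Or.inl (h3 hx)⟩
      · refine Or.inr ⟨t1, t2, t', ⟨hzw.trans h1.1, fun hx => ?_⟩, h2,
          gts_mono Bm_le_BmCl h3, Or.inl h4⟩
        exact ⟨Or.inr (Or.inr ⟨p0, pk, hzp0, hp0q, hqpk, hzpk⟩), Or.inl ((h1.2 hx).2)⟩
  · rintro s t (h | h | h) f hf0 hdiv
    · obtain ⟨t', k, h1, h2⟩ := Bm_div s t h f hf0 hdiv
      exact ⟨t', k, h1, Or.inl h2⟩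
    · obtain ⟨p0, pk, hzp0, hp0q, hqpk, hzpk⟩ := h
      obtain ⟨w, k, h1, h2⟩ := Bm_div s pk hzpk f hf0 hdiv
      exact ⟨w, k, Relation.TransGen.trans_right hqpk h1, Or.inl h2⟩
    · obtain ⟨p0, pk, hzp0, hp0q, hqpk, hzpk⟩ := h
      obtain ⟨w, hzw, hqw⟩ := Bm_sim hp0q (Bm_sym hzp0)
      obtain ⟨w', k, h1, h2⟩ := Bm_div s w hqw f hf0 hdiv
      exact ⟨w', k, Relation.TransGen.trans_right hzw h1, Or.inl h2⟩

/-- Stuttering / interpolation: interior states of τ-paths between two partners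
of `z` are themselves partners of `z`. -/
theorem Bm_interp {z p0 q pk : S} (h0 : Bm L x y z p0) (h1 : L.TauStar p0 q)
    (h2 : L.TauStar q pk) (h3 : Bm L x y z pk) : Bm L x y z q :=
  ⟨BmCl L x y, BmCl_semi, Or.inr (Or.inl ⟨p0, pk, h0, h1, h2, h3⟩)⟩

/-- The largest semi-generic bisimulation with explicit divergence is a genuine
generic bisimulation with explicit divergence. -/
theorem Bm_genuine : L.IsGenBisimED x y (Bm L x y) := by
  refine ⟨⟨fun s t h => Bm_sym h, ?_⟩, Bm_div⟩
  intro s t a s' hst htr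
  rcases Bm_step hst htr with ⟨ha, th, h1, h2, h3⟩ | ⟨t1, t2, t', h1, h2, h3, h4⟩
  · rcases h1.cases_tail with heq | ⟨q, hq1, hq2⟩
    · left
      exact ⟨ha, heq ▸ h2⟩
    · right
      subst ha
      refine ⟨q, th, th, ⟨hq1, fun hx => ⟨hst, ?_⟩⟩, hq2,
        ⟨Relation.ReflTransGen.refl, fun hy => ⟨h2, h2⟩⟩, h2⟩
      exact Bm_interp hst hq1 (Relation.ReflTransGen.single hq2) (h3 hx)
  · right
    exact ⟨t1, t2, t', h1, h2, h3, h4⟩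

theorem genBisimilarED_iff_Bm {s t : S} :
    L.GenBisimilarED x y s t ↔ Bm L x y s t := by
  constructor
  · rintro ⟨R, hR, hst⟩
    exact ⟨R, isSemi_of_genED hR, hst⟩
  · intro h
    exact ⟨Bm L x y, Bm_genuine, h⟩

/-! ### Plans and the stay rank -/

variable (L x y)

/-- A concrete plan for Duplicator to answer challenge `u →a u'` from state `v`,
with all interpolants suitably related. -/
def APlan (u : S) (a : A) (u' v : S) : Prop :=
  ∃ t1 t2 t', L.TauStar v t1 ∧ L.Trans t1 a t2 ∧ L.TauStar t2 t' ∧ Bm L x y u' t' ∧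
    (x = XY.b → Bm L x y u t1 ∧
      ∀ q, L.TauStar v q → L.TauStar q t1 → Bm L x y u q) ∧
    (y = XY.b → Bm L x y u' t2 ∧
      ∀ q, L.TauStar t2 q → L.TauStar q t' → Bm L x y u' q)

variable {L x y}

/-- From the genuine transfer property, upgrade to a plan (or a τ-stay). -/
lemma plan_or_stay {u v : S} {a : A} {u' : S} (hB : Bm L x y u v)
    (htr : L.Trans u a u') :
    (a = L.tau ∧ Bm L x y u' v) ∨ APlan L x y u a u' v := by
  rcases (Bm_genuine (L := L) (x := x) (y := y)).1.2 u v a u' hB htr with h | h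
  · exact Or.inl h
  · obtain ⟨t1, t2, t', h1, h2, h3, h4⟩ := h
    refine Or.inr ⟨t1, t2, t', h1.1, h2, h3.1, h4, fun hx => ?_, fun hy => ?_⟩
    · refine ⟨(h1.2 hx).2, fun q hq1 hq2 => Bm_interp hB hq1 hq2 (h1.2 hx).2⟩
    · refine ⟨(h3.2 hy).1, fun q hq1 hq2 => Bm_interp (h3.2 hy).1 hq1 hq2 (h3.2 hy).2⟩

variable (L x y)

/-- The rank relation for Duplicator's `dup1`-answers to τ-challenges. -/
def StayRel (v : S) : S → S → Prop := fun u' u =>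
  L.TauStep u u' ∧ Bm L x y u v ∧ Bm L x y u' v ∧ ¬ APlan L x y u L.tau u' v

variable {L x y}

lemma not_acc_step {α : Type u} {r : α → α → Prop} {u : α} (h : ¬ Acc r u) :
    ∃ u', r u' u ∧ ¬ Acc r u' := by
  by_contra hno
  push_neg at hno
  exact h (Acc.intro u fun u' hu' => by
    by_contra hacc
    exact hacc (hno u' hu'))

theorem stayRel_wf (v : S) : WellFounded (StayRel L x y v) := by
  classical
  constructor
  intro u₀
  by_contra hacc
  -- build an infinite descending chain
  have hstep : ∀ p : {w : S // ¬ Acc (StayRel L x y v) w},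
      ∃ w' : {w : S // ¬ Acc (StayRel L x y v) w}, StayRel L x y v w'.1 p.1 := by
    rintro ⟨w, hw⟩
    obtain ⟨w', hw1, hw2⟩ := not_acc_step hw
    exact ⟨⟨w', hw2⟩, hw1⟩
  let g : ℕ → {w : S // ¬ Acc (StayRel L x y v) w} :=
    fun n => Nat.rec ⟨u₀, hacc⟩ (fun _ p => (hstep p).choose) n
  have hg : ∀ n, StayRel L x y v (g (n+1)).1 (g n).1 := fun n => (hstep (g n)).choose_spec
  set f : ℕ → S := fun n => (g n).1 with hf
  have hdiv : ∀ i, L.TauStep (f i) (f (i + 1)) := fun i => (hg i).1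
  have hBall : ∀ i, Bm L x y (f i) v := fun i => (hg i).2.1
  have hnoplan : ∀ i, ¬ APlan L x y (f i) L.tau (f (i+1)) v := fun i => (hg i).2.2.2
  -- apply the divergence condition at (f 0, v)
  obtain ⟨v₁, k, hvv₁, hk⟩ := Bm_div (f 0) v (hBall 0) f rfl hdiv
  -- the step f k →τ f (k+1) admits a plan: contradiction
  apply hnoplan k
  have hBkv₁ : Bm L x y (f k) v₁ := hk
  rcases plan_or_stay hBkv₁ (hdiv k) with ⟨_, hstay⟩ | hplan
  · -- stay: build the plan from the last step of v ↠⁺ v₁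
    obtain ⟨q, hq1, hq2⟩ := (Relation.TransGen.tail'_iff).1 hvv₁
    refine ⟨q, v₁, v₁, hq1, hq2, Relation.ReflTransGen.refl, hstay, fun hx => ?_, fun hy => ?_⟩
    · refine ⟨Bm_interp (hBall k) hq1 (Relation.ReflTransGen.single hq2) hBkv₁, ?_⟩
      intro q' hq'1 hq'2
      exact Bm_interp (hBall k) hq'1 (hq'2.trans (Relation.ReflTransGen.single hq2)) hBkv₁
    · exact ⟨hstay, fun q' hq'1 hq'2 => Bm_interp hstay hq'1 hq'2 hstay⟩
  · -- a genuine plan from v₁: prepend v ↠⁺ v₁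
    obtain ⟨t1, t2, t', h1, h2, h3, h4, hx', hy'⟩ := hplan
    refine ⟨t1, t2, t', (hvv₁.to_reflTransGen).trans h1, h2, h3, h4, fun hx => ?_, hy'⟩
    refine ⟨(hx' hx).1, ?_⟩
    intro q hq1 hq2
    exact Bm_interp (hBall k) hq1 hq2 ((hx' hx).1)

end RelTheory


/-! ## From the relation to the game (soundness of the gbed game) -/

section GameSound

variable {S : Type u} {A : Type v} {L : LTS S A} {x y : XY}

lemma frown_mem_Exy : Face.frown ∈ Exy x y ↔ x = XY.o := by
  simp [Exy]

lemma smile_mem_Exy : Face.smile ∈ Exy x y ↔ y = XY.o := by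
  simp [Exy]

variable (L x y)

/-- Frown-phase invariant data. -/
def IFr (u w : S) (a : A) (u' p : S) : Prop :=
  Bm L x y u w ∧ (x = XY.b → w = p) ∧
    ((a = L.tau ∧ Bm L x y u' p) ∨ APlan L x y u a u' p)

/-- Smile-phase invariant data. -/
def ISm (U W : S) (a : A) (u' q : S) : Prop :=
  Bm L x y U W ∧ ∃ q₁ t', L.TauStep q q₁ ∧ L.TauStar q₁ t' ∧ Bm L x y u' t' ∧
    (y = XY.b → U = u' ∧ W = q ∧
      ∀ r, L.TauStar q r → L.TauStar r t' → Bm L x y u' r)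

/-- The invariant set of configurations. -/
def ISet : Set (GConf S A) := fun c =>
  match c with
  | .sp (u, v) none none _ => Bm L x y u v
  | .sp (u, w) (some (a, u')) (some (p, Face.frown)) _ => IFr L x y u w a u' p
  | .dup (u, w) (some (a, u')) (some (p, Face.frown)) _ => IFr L x y u w a u' p
  | .sp (U, W) (some (a, u')) (some (q, Face.smile)) _ => ISm L x y U W a u' q
  | .dup (U, W) (some (a, u')) (some (q, Face.smile)) _ => ISm L x y U W a u' q
  | _ => False

/-- Abbreviations for the gbed game. -/
def GMv : GConf S A → GConf S A → Prop := GMove L (Exy x y) Rw.star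

variable {L x y}

/-- Fresh frown data from a transition between related states. -/
lemma fresh_IFr {u v : S} {b : A} {u'' : S} (hB : Bm L x y u v)
    (htr : L.Trans u b u'') : IFr L x y u v b u'' v := by
  refine ⟨hB, fun _ => rfl, ?_⟩
  exact plan_or_stay hB htr



lemma xy_eq_o {z : XY} (h : z ≠ XY.b) : z = XY.o := by
  cases z
  · rfl
  · exact absurd rfl h

/-- The smile-phase runner. -/
lemma smileRun {u' : S} {a : A} {q₁ t' : S} (hw : L.TauStar q₁ t') :
    ∀ {q : S} (_ : L.TauStep q q₁)
      (_ : Bm L x y u' t')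
      (_ : y = XY.b → ∀ r, L.TauStar q r → L.TauStar r t' → Bm L x y u' r)
      {U W : S} (_ : Bm L x y U W)
      (_ : y = XY.b → U = u' ∧ W = q),
      (∀ r, RI GConf.dupOwned (GMv L x y) GConf.reward (ISet L x y)
          (GConf.dup (U, W) (some (a, u')) (some (q, Face.smile)) r)) ∧
      (∀ r, RI GConf.dupOwned (GMv L x y) GConf.reward (ISet L x y)
          (GConf.sp (U, W) (some (a, u')) (some (q, Face.smile)) r)) := by
  induction hw using Relation.ReflTransGen.head_induction_on with
  | refl =>
    -- q₁ = t' : close with dup3b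
    intro q hst hBt' hy U W hUW hyp
    have hdup : ∀ r, RI GConf.dupOwned (GMv L x y) GConf.reward (ISet L x y)
        (GConf.dup (U, W) (some (a, u')) (some (q, Face.smile)) r) := by
      intro r
      refine RI.dup' trivial (GMove.dup3b hst) (Or.inl ⟨rfl, ?_⟩)
      show ISet L x y (GConf.sp (u', t') none none Rw.check)
      exact hBt'
    refine ⟨hdup, fun r => ?_⟩
    refine RI.sp' (fun h => h) ?_
    intro d hd
    cases hd with
    | sp1 hc => exact Or.inr (hdup _)
    | sp2b h hc => exact Or.inl ⟨rfl, fresh_IFr hUW h⟩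
    | sp3 h => exact Or.inl ⟨rfl, fresh_IFr (Bm_sym hUW) h⟩
  | @head q₁' q₂ hq₁q₂ hw' IH =>
    intro q hst hBt' hy U W hUW hyp
    have hdup : ∀ r, RI GConf.dupOwned (GMv L x y) GConf.reward (ISet L x y)
        (GConf.dup (U, W) (some (a, u')) (some (q, Face.smile)) r) := by
      intro r
      have hy' : y = XY.b → ∀ r, L.TauStar q₁' r → L.TauStar r t' → Bm L x y u' r := by
        intro hyb r hr1 hr2
        exact hy hyb r ((Relation.ReflTransGen.single hst).trans hr1) hr2
      by_cases hyy : y = XY.b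
      · have hU : U = u' := (hyp hyy).1
        refine RI.dup' trivial (GMove.dup3a hst) (Or.inr ?_)
        have hB' : Bm L x y u' q₁' :=
          hy hyy q₁' (Relation.ReflTransGen.single hst)
            ((Relation.ReflTransGen.single hq₁q₂).trans hw')
        have hB'' : Bm L x y U q₁' := by rw [hU]; exact hB'
        exact (IH hq₁q₂ hBt' hy' hB'' (fun _ => ⟨hU, rfl⟩)).2 _
      · refine RI.dup' trivial (GMove.dup3c hst (smile_mem_Exy.2 (xy_eq_o hyy)))
          (Or.inr ?_)
        exact (IH hq₁q₂ hBt' hy' hUW (fun hyb => (hyy hyb).elim)).2 _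
    refine ⟨hdup, fun r => ?_⟩
    refine RI.sp' (fun h => h) ?_
    intro d hd
    cases hd with
    | sp1 hc => exact Or.inr (hdup _)
    | sp2b h hc => exact Or.inl ⟨rfl, fresh_IFr hUW h⟩
    | sp3 h => exact Or.inl ⟨rfl, fresh_IFr (Bm_sym hUW) h⟩

/-- The frown-phase runner. -/
lemma frownRun {u : S} {a : A} {u' : S} {p t1 : S} (hw : L.TauStar p t1) :
    ∀ {t2 t' : S} (_ : L.Trans t1 a t2) (_ : L.TauStar t2 t')
      (_ : Bm L x y u' t')
      (_ : x = XY.b → Bm L x y u t1 ∧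
          ∀ q, L.TauStar p q → L.TauStar q t1 → Bm L x y u q)
      (_ : y = XY.b → Bm L x y u' t2 ∧
          ∀ r, L.TauStar t2 r → L.TauStar r t' → Bm L x y u' r)
      {w : S} (_ : Bm L x y u w) (_ : x = XY.b → w = p),
      (∀ r, RI GConf.dupOwned (GMv L x y) GConf.reward (ISet L x y)
          (GConf.dup (u, w) (some (a, u')) (some (p, Face.frown)) r)) ∧
      (∀ r, RI GConf.dupOwned (GMv L x y) GConf.reward (ISet L x y)
          (GConf.sp (u, w) (some (a, u')) (some (p, Face.frown)) r)) := by
  induction hw using Relation.ReflTransGen.head_induction_on with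
  | refl =>
    -- p = t1 : do the a-step
    intro t2 t' h2 h3 h4 hx hy w hUW hxw
    have hdup : ∀ r, RI GConf.dupOwned (GMv L x y) GConf.reward (ISet L x y)
        (GConf.dup (u, w) (some (a, u')) (some (t1, Face.frown)) r) := by
      intro r
      rcases Relation.ReflTransGen.cases_head h3 with heq | ⟨q₁, hstep, hrest⟩
      · -- t2 = t' : close with dup2b
        refine RI.dup' trivial (GMove.dup2b h2) (Or.inl ⟨rfl, ?_⟩)
        show ISet L x y (GConf.sp (u', t2) none none Rw.check)
        exact heq ▸ h4
      · by_cases hyy : y = XY.b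
        · refine RI.dup' trivial (GMove.dup2a h2) (Or.inr ?_)
          have hy' := hy hyy
          exact (smileRun hrest hstep h4 (fun _ => hy'.2) hy'.1 (fun _ => ⟨rfl, rfl⟩)).2 _
        · refine RI.dup' trivial (GMove.dup2c h2 (smile_mem_Exy.2 (xy_eq_o hyy)))
            (Or.inr ?_)
          exact (smileRun hrest hstep h4 (fun hyb => (hyy hyb).elim)
            hUW (fun hyb => (hyy hyb).elim)).2 _
    refine ⟨hdup, fun r => ?_⟩
    refine RI.sp' (fun h => h) ?_
    intro d hd
    cases hd with
    | sp1 hc => exact Or.inr (hdup _)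
    | sp2b h hc => exact Or.inl ⟨rfl, fresh_IFr hUW h⟩
    | sp3 h => exact Or.inl ⟨rfl, fresh_IFr (Bm_sym hUW) h⟩
  | @head p' q hpq hw' IH =>
    intro t2 t' h2 h3 h4 hx hy w hUW hxw
    have hdup : ∀ r, RI GConf.dupOwned (GMv L x y) GConf.reward (ISet L x y)
        (GConf.dup (u, w) (some (a, u')) (some (p', Face.frown)) r) := by
      intro r
      have hx' : x = XY.b → Bm L x y u t1 ∧
          ∀ q', L.TauStar q q' → L.TauStar q' t1 → Bm L x y u q' := by
        intro hxb
        exact ⟨(hx hxb).1, fun q' hq1 hq2 =>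
          (hx hxb).2 q' ((Relation.ReflTransGen.single hpq).trans hq1) hq2⟩
      by_cases hxx : x = XY.b
      · refine RI.dup' trivial (GMove.dup3a hpq) (Or.inr ?_)
        have hBuq : Bm L x y u q :=
          (hx hxx).2 q (Relation.ReflTransGen.single hpq) hw'
        exact (IH h2 h3 h4 hx' hy hBuq (fun _ => rfl)).2 _
      · refine RI.dup' trivial (GMove.dup3c hpq (frown_mem_Exy.2 (xy_eq_o hxx)))
          (Or.inr ?_)
        exact (IH h2 h3 h4 hx' hy hUW (fun hxb => (hxx hxb).elim)).2 _
    refine ⟨hdup, fun r => ?_⟩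
    refine RI.sp' (fun h => h) ?_
    intro d hd
    cases hd with
    | sp1 hc => exact Or.inr (hdup _)
    | sp2b h hc => exact Or.inl ⟨rfl, fresh_IFr hUW h⟩
    | sp3 h => exact Or.inl ⟨rfl, fresh_IFr (Bm_sym hUW) h⟩


/-- The †-configuration runner, by well-founded recursion on the stay rank. -/
lemma dagRun (v : S) : ∀ u, Bm L x y u v → ∀ r,
    RI GConf.dupOwned (GMv L x y) GConf.reward (ISet L x y)
      (GConf.sp (u, v) none none r) := by
  intro u₀
  refine (stayRel_wf (L := L) (x := x) (y := y) v).induction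
    (C := fun u => Bm L x y u v → ∀ r,
      RI GConf.dupOwned (GMv L x y) GConf.reward (ISet L x y)
        (GConf.sp (u, v) none none r)) u₀ ?_
  intro u IH hB r
  refine RI.sp' (fun h => h) ?_
  intro d hd
  cases hd with
  | sp1 hc => exact absurd rfl hc
  | @sp2a _ _ _ _ a' s' h =>
    refine Or.inr ?_
    by_cases hap : APlan L x y u a' s' v
    · obtain ⟨t1, t2, t', hp1, hp2, hp3, hp4, hpx, hpy⟩ := hap
      exact (frownRun hp1 hp2 hp3 hp4 hpx hpy hB (fun _ => rfl)).1 _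
    · rcases plan_or_stay hB h with ⟨ha, hstay⟩ | hap'
      · subst ha
        refine RI.dup' trivial GMove.dup1 (Or.inr ?_)
        exact IH s' ⟨h, hB, hstay, hap⟩ hstay _
      · exact absurd hap' hap
  | sp2b h hc => exact Or.inl ⟨rfl, fresh_IFr hB h⟩
  | sp3 h => exact Or.inl ⟨rfl, fresh_IFr (Bm_sym hB) h⟩

/-- Derivations for frown configurations in the invariant. -/
lemma frown_deriv {u w : S} {a : A} {u' p : S} (hz : IFr L x y u w a u' p) :
    (∀ r, RI GConf.dupOwned (GMv L x y) GConf.reward (ISet L x y)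
        (GConf.dup (u, w) (some (a, u')) (some (p, Face.frown)) r)) ∧
    (∀ r, RI GConf.dupOwned (GMv L x y) GConf.reward (ISet L x y)
        (GConf.sp (u, w) (some (a, u')) (some (p, Face.frown)) r)) := by
  obtain ⟨hBuw, hxw, hfr⟩ := hz
  rcases hfr with ⟨ha, hBp⟩ | hap
  · subst ha
    have hdup : ∀ r, RI GConf.dupOwned (GMv L x y) GConf.reward (ISet L x y)
        (GConf.dup (u, w) (some (L.tau, u')) (some (p, Face.frown)) r) :=
      fun r => RI.dup' trivial GMove.dup1 (Or.inr (dagRun p u' hBp Rw.star))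
    refine ⟨hdup, fun r => RI.sp' (fun h => h) ?_⟩
    intro d hd
    cases hd with
    | sp1 hc => exact Or.inr (hdup _)
    | sp2b h hc => exact Or.inl ⟨rfl, fresh_IFr hBuw h⟩
    | sp3 h => exact Or.inl ⟨rfl, fresh_IFr (Bm_sym hBuw) h⟩
  · obtain ⟨t1, t2, t', hp1, hp2, hp3, hp4, hpx, hpy⟩ := hap
    exact frownRun hp1 hp2 hp3 hp4 hpx hpy hBuw hxw

/-- Derivations for smile configurations in the invariant. -/
lemma smile_deriv {U W : S} {a : A} {u' q : S} (hz : ISm L x y U W a u' q) :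
    (∀ r, RI GConf.dupOwned (GMv L x y) GConf.reward (ISet L x y)
        (GConf.dup (U, W) (some (a, u')) (some (q, Face.smile)) r)) ∧
    (∀ r, RI GConf.dupOwned (GMv L x y) GConf.reward (ISet L x y)
        (GConf.sp (U, W) (some (a, u')) (some (q, Face.smile)) r)) := by
  obtain ⟨hBUW, q₁, t', hst, hw, hBt', hyc⟩ := hz
  exact smileRun hw hst hBt' (fun hyb => (hyc hyb).2.2) hBUW
    (fun hyb => ⟨(hyc hyb).1, (hyc hyb).2.1⟩)

/-- Every invariant configuration admits a derivation. -/
lemma ISet_deriv : ∀ z ∈ ISet L x y,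
    RI GConf.dupOwned (GMv L x y) GConf.reward (ISet L x y) z := by
  intro z hz
  match z, hz with
  | .sp (u, v) none none r, hz => exact dagRun v u hz r
  | .sp (u, w) (some (a, u')) (some (p, Face.frown)) r, hz => exact (frown_deriv hz).2 r
  | .dup (u, w) (some (a, u')) (some (p, Face.frown)) r, hz => exact (frown_deriv hz).1 r
  | .sp (U, W) (some (a, u')) (some (q, Face.smile)) r, hz => exact (smile_deriv hz).2 r
  | .dup (U, W) (some (a, u')) (some (q, Face.smile)) r, hz => exact (smile_deriv hz).1 r
  | .sp (u, v) none (some m) r, hz => exact hz.elim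
  | .sp (u, v) (some c) none r, hz => exact hz.elim
  | .dup (u, v) none none r, hz => exact hz.elim
  | .dup (u, v) none (some m) r, hz => exact hz.elim
  | .dup (u, v) (some c) none r, hz => exact hz.elim

/-- Soundness: the relation implies Duplicator wins the gbed game. -/
theorem Bm_gbedEquiv {s t : S} (h : Bm L x y s t) : L.gbedEquiv (Exy x y) s t := by
  have hmem : GConf.sp (s, t) none none Rw.star ∈
      WinSet GConf.dupOwned (GMv L x y) GConf.reward :=
    winSet_coind ISet_deriv h
  exact winSet_dupWins hmem

end GameSound


/-! ## From the game to the relation (completeness of the gbed game) -/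

section GameComplete

variable {S : Type u} {A : Type v} {L : LTS S A} {x y : XY}

variable (L x y)

/-- The winning set of the gbed game. -/
def Wg : Set (GConf S A) := WinSet GConf.dupOwned (GMv L x y) GConf.reward

/-- The extracted † relation. -/
def Rg (u v : S) : Prop := GConf.sp (u, v) none none Rw.star ∈ Wg L x y

/-- The extracted partial-match (smile) relation. -/
def Rs (u v : S) : Prop :=
  ∃ (a : A) (r : Rw),
    GConf.sp (u, v) (some (a, u)) (some (v, Face.smile)) r ∈ Wg L x y

/-- The extracted relation. -/
def Rext (u v : S) : Prop :=
  Rg L x y u v ∨ Rg L x y v u ∨ Rs L x y u v ∨ Rs L x y v u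

variable {L x y}

lemma Rext_symm {u v : S} (h : Rext L x y u v) : Rext L x y v u := by
  rcases h with h | h | h | h
  · exact Or.inr (Or.inl h)
  · exact Or.inl h
  · exact Or.inr (Or.inr (Or.inr h))
  · exact Or.inr (Or.inr (Or.inl h))

/-- Moves from Duplicator-owned configurations do not depend on the reward. -/
lemma gmove_dup_reward {p : S × S} {c m} {r r' : Rw} {d : GConf S A}
    (h : GMv L x y (GConf.dup p c m r) d) : GMv L x y (GConf.dup p c m r') d := by
  cases h with
  | dup1 => exact GMove.dup1
  | dup2a h => exact GMove.dup2a h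
  | dup2b h => exact GMove.dup2b h
  | dup2c h hE => exact GMove.dup2c h hE
  | dup3a h => exact GMove.dup3a h
  | dup3b h => exact GMove.dup3b h
  | dup3c h hE => exact GMove.dup3c h hE

/-- `RI`-membership of Duplicator configurations does not depend on the reward. -/
lemma RI_dup_reward {Z : Set (GConf S A)} {p : S × S} {c m} {r r' : Rw}
    (h : RI GConf.dupOwned (GMv L x y) GConf.reward Z (GConf.dup p c m r)) :
    RI GConf.dupOwned (GMv L x y) GConf.reward Z (GConf.dup p c m r') := by
  cases h with
  | dupZ hD hM hr hz => exact RI.dupZ trivial (gmove_dup_reward hM) hr hz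
  | dupR hD hM h => exact RI.dupR trivial (gmove_dup_reward hM) h
  | sp hD h => exact absurd trivial hD

/-- All move-targets of a winning Spoiler configuration are again derivable. -/
lemma spW_move {c d : GConf S A} (hc : c ∈ Wg L x y) (hsp : ¬ GConf.dupOwned c)
    (hm : GMv L x y c d) :
    RI GConf.dupOwned (GMv L x y) GConf.reward (Wg L x y) d := by
  cases winSet_mem_RI hc with
  | dupZ hD _ _ _ => exact absurd hD hsp
  | dupR hD _ _ => exact absurd hD hsp
  | sp hD h =>
    by_cases hz : GConf.reward d ∧ d ∈ Wg L x y
    · exact winSet_mem_RI hz.2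
    · exact h d hm hz

lemma RI_Wg_mem {c : GConf S A}
    (h : RI GConf.dupOwned (GMv L x y) GConf.reward (Wg L x y) c) : c ∈ Wg L x y :=
  RI_winSet_subset h

/-- Spoiler-configuration absorption: if an in-walk frown Spoiler configuration
(with match equal to the pair's second component) is winning, so is the
corresponding `†` configuration. -/
lemma WSP {u p : S} {b : A} {u'' : S} {r : Rw}
    (h : GConf.sp (u, p) (some (b, u'')) (some (p, Face.frown)) r ∈ Wg L x y) :
    Rg L x y u p := by
  refine winSet_coind
    (Z := Wg L x y ∪ {GConf.sp (u, p) none none Rw.star}) ?_ (Or.inr rfl)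
  rintro z (hz | hz)
  · exact RI_mono Set.subset_union_left (winSet_mem_RI hz)
  · rw [Set.mem_singleton_iff] at hz
    subst hz
    refine RI.sp' (fun hh => hh) ?_
    intro d hd
    cases hd with
    | sp1 hc => exact absurd rfl hc
    | @sp2a _ _ _ _ c₃ u₃ h₃ =>
      refine Or.inr (RI_mono Set.subset_union_left ?_)
      by_cases hsame : (c₃, u₃) = (b, u'')
      · have hmv : GMv L x y
            (GConf.sp (u, p) (some (b, u'')) (some (p, Face.frown)) r)
            (GConf.dup (u, p) (some (c₃, u₃)) (some (p, Face.frown)) Rw.star) := by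
          rw [hsame]
          exact GMove.sp1 (by simp)
        exact spW_move h (fun hh => hh) hmv
      · have hmv : GMv L x y
            (GConf.sp (u, p) (some (b, u'')) (some (p, Face.frown)) r)
            (GConf.dup (u, p) (some (c₃, u₃)) (some (p, Face.frown)) Rw.check) := by
          refine GMove.sp2b h₃ ?_
          intro hcc
          exact hsame (by injection hcc with h1; exact h1.symm ▸ rfl)
        exact RI_dup_reward (spW_move h (fun hh => hh) hmv)
    | @sp2b _ _ _ _ _ c₃ u₃ h₃ hc =>
      refine Or.inl ⟨rfl, ?_⟩
      by_cases hsame : (c₃, u₃) = (b, u'')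
      · have hmv : GMv L x y
            (GConf.sp (u, p) (some (b, u'')) (some (p, Face.frown)) r)
            (GConf.dup (u, p) (some (c₃, u₃)) (some (p, Face.frown)) Rw.star) := by
          rw [hsame]
          exact GMove.sp1 (by simp)
        exact Or.inl (RI_Wg_mem (RI_dup_reward (r' := Rw.check) (spW_move h (fun hh => hh) hmv)))
      · have hmv : GMv L x y
            (GConf.sp (u, p) (some (b, u'')) (some (p, Face.frown)) r)
            (GConf.dup (u, p) (some (c₃, u₃)) (some (p, Face.frown)) Rw.check) := by
          refine GMove.sp2b h₃ ?_
          intro hcc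
          exact hsame (by injection hcc with h1; exact h1.symm ▸ rfl)
        exact Or.inl (RI_Wg_mem (spW_move h (fun hh => hh) hmv))
    | @sp3 _ _ _ _ _ c₃ p₃ h₃ =>
      refine Or.inl ⟨rfl, ?_⟩
      have hmv : GMv L x y
          (GConf.sp (u, p) (some (b, u'')) (some (p, Face.frown)) r)
          (GConf.dup (p, u) (some (c₃, p₃)) (some (u, Face.frown)) Rw.check) :=
        GMove.sp3 h₃
      exact Or.inl (RI_Wg_mem (spW_move h (fun hh => hh) hmv))


lemma gmove_sp_reward {p : S × S} {c m} {r r' : Rw} {d : GConf S A}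
    (h : GMv L x y (GConf.sp p c m r) d) : GMv L x y (GConf.sp p c m r') d := by
  cases h with
  | sp1 hc => exact GMove.sp1 hc
  | sp2a h => exact GMove.sp2a h
  | sp2b h hc => exact GMove.sp2b h hc
  | sp3 h => exact GMove.sp3 h

lemma RI_sp_reward {Z : Set (GConf S A)} {p : S × S} {c m} {r r' : Rw}
    (h : RI GConf.dupOwned (GMv L x y) GConf.reward Z (GConf.sp p c m r)) :
    RI GConf.dupOwned (GMv L x y) GConf.reward Z (GConf.sp p c m r') := by
  cases h with
  | dupZ hD hM hr hz => exact hD.elim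
  | dupR hD hM h => exact hD.elim
  | sp hD h =>
    exact RI.sp (fun hh => hh) (fun d hM hg => h d (gmove_sp_reward hM) hg)

lemma Wg_sp_reward {p : S × S} {c m} {r r' : Rw}
    (h : GConf.sp p c m r ∈ Wg L x y) : GConf.sp p c m r' ∈ Wg L x y :=
  RI_Wg_mem (RI_sp_reward (winSet_mem_RI h))

/-- Extraction along the smile phase. -/
lemma extractSmile {c : GConf S A}
    (hri : RI GConf.dupOwned (GMv L x y) GConf.reward (Wg L x y) c) :
    ∀ {U V : S} {b : A} {u'' q t2 : S} {r : Rw},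
      (c = GConf.dup (U, V) (some (b, u'')) (some (q, Face.smile)) r ∨
       c = GConf.sp (U, V) (some (b, u'')) (some (q, Face.smile)) r) →
      L.TauStar t2 q →
      ∃ t', L.TauStar t2 t' ∧ Rg L x y u'' t' := by
  induction hri with
  | @dupZ c d hD hM hr hz =>
    intro U V b u'' q t2 r hshape hts
    rcases hshape with heq | heq
    · subst heq
      cases hM with
      | dup1 => exact absurd hr (by intro hrr; exact Rw.noConfusion hrr)
      | dup3a h => exact absurd hr (by intro hrr; exact Rw.noConfusion hrr)
      | dup3c h hE => exact absurd hr (by intro hrr; exact Rw.noConfusion hrr)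
      | @dup3b _ _ _ _ _ q₁ _ h =>
        exact ⟨q₁, hts.trans (Relation.ReflTransGen.single h),
          Wg_sp_reward hz⟩
    · subst heq
      exact hD.elim
  | @dupR c d hD hM hsub ih =>
    intro U V b u'' q t2 r hshape hts
    rcases hshape with heq | heq
    · subst heq
      cases hM with
      | dup1 =>
        exact ⟨q, hts, Wg_sp_reward (RI_Wg_mem hsub)⟩
      | @dup3b _ _ _ _ _ q₁ _ h =>
        exact ⟨q₁, hts.trans (Relation.ReflTransGen.single h),
          Wg_sp_reward (RI_Wg_mem hsub)⟩
      | @dup3a _ _ _ _ _ _ q₁ _ h =>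
        exact ih (Or.inr rfl) (hts.trans (Relation.ReflTransGen.single h))
      | @dup3c _ _ _ _ _ _ q₁ _ h hE =>
        exact ih (Or.inr rfl) (hts.trans (Relation.ReflTransGen.single h))
    · subst heq
      exact hD.elim
  | @sp c hD h ih =>
    intro U V b u'' q t2 r hshape hts
    rcases hshape with heq | heq
    · subst heq
      exact absurd trivial hD
    · subst heq
      have hmv : GMv L x y (GConf.sp (U, V) (some (b, u'')) (some (q, Face.smile)) r)
          (GConf.dup (U, V) (some (b, u'')) (some (q, Face.smile)) Rw.star) :=
        GMove.sp1 (by simp)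
      refine ih _ hmv ?_ (Or.inl rfl) hts
      rintro ⟨hrw, _⟩
      exact Rw.noConfusion hrw


variable (L x y)

/-- The result of extracting an answer to a frown challenge. -/
def FrRes (u v₀ : S) (b : A) (u'' : S) : Prop :=
  (b = L.tau ∧ Rext L x y u'' v₀) ∨
  ∃ t1 t2 t', L.TauStar v₀ t1 ∧ L.Trans t1 b t2 ∧ L.TauStar t2 t' ∧
    Rext L x y u'' t' ∧ (x = XY.b → Rext L x y u t1) ∧
    (y = XY.b → Rext L x y u'' t2 ∧ Rext L x y u'' t')

variable {L x y}

/-- Extraction along the frown phase. -/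
lemma extractFrown {c : GConf S A}
    (hri : RI GConf.dupOwned (GMv L x y) GConf.reward (Wg L x y) c) :
    ∀ {u V : S} {b : A} {u'' p : S} {r : Rw},
      (c = GConf.dup (u, V) (some (b, u'')) (some (p, Face.frown)) r ∨
       c = GConf.sp (u, V) (some (b, u'')) (some (p, Face.frown)) r) →
      ∀ {v₀ : S}, L.TauStar v₀ p →
      (x = XY.b → Rext L x y u p) →
      (p = v₀ ∨ ∃ qp, L.TauStar v₀ qp ∧ L.TauStep qp p ∧ (x = XY.b → Rext L x y u qp)) →
      FrRes L x y u v₀ b u'' := by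
  induction hri with
  | @dupZ c d hD hM hr hz =>
    intro u V b u'' p r hshape v₀ hts hxp hpred
    rcases hshape with heq | heq
    · subst heq
      cases hM with
      | dup1 => exact absurd hr (by intro hrr; exact Rw.noConfusion hrr)
      | dup2a h => exact absurd hr (by intro hrr; exact Rw.noConfusion hrr)
      | dup2c h hE => exact absurd hr (by intro hrr; exact Rw.noConfusion hrr)
      | dup3a h => exact absurd hr (by intro hrr; exact Rw.noConfusion hrr)
      | dup3c h hE => exact absurd hr (by intro hrr; exact Rw.noConfusion hrr)
      | @dup2b _ _ _ _ _ t2 _ h =>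
        refine Or.inr ⟨p, t2, t2, hts, h, Relation.ReflTransGen.refl, ?_, hxp, ?_⟩
        · exact Or.inl (Wg_sp_reward hz)
        · exact fun _ => ⟨Or.inl (Wg_sp_reward hz), Or.inl (Wg_sp_reward hz)⟩
    · subst heq
      exact hD.elim
  | @dupR c d hD hM hsub ih =>
    intro u V b u'' p r hshape v₀ hts hxp hpred
    rcases hshape with heq | heq
    · subst heq
      cases hM with
      | dup1 =>
        have hRg : Rg L x y u'' p := Wg_sp_reward (RI_Wg_mem hsub)
        rcases hpred with heqv | ⟨qp, h1, h2, hx3⟩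
        · subst heqv
          exact Or.inl ⟨rfl, Or.inl hRg⟩
        · refine Or.inr ⟨qp, p, p, h1, h2, Relation.ReflTransGen.refl,
            Or.inl hRg, hx3, fun _ => ⟨Or.inl hRg, Or.inl hRg⟩⟩
      | @dup2b _ _ _ _ _ t2 _ h =>
        have hRg : Rg L x y u'' t2 := Wg_sp_reward (RI_Wg_mem hsub)
        exact Or.inr ⟨p, t2, t2, hts, h, Relation.ReflTransGen.refl,
          Or.inl hRg, hxp, fun _ => ⟨Or.inl hRg, Or.inl hRg⟩⟩
      | @dup2a _ _ _ _ _ t2 _ h =>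
        have hRs : Rs L x y u'' t2 := ⟨b, Rw.star, RI_Wg_mem hsub⟩
        obtain ⟨t', hts', hRg⟩ :=
          extractSmile hsub (Or.inr rfl) (Relation.ReflTransGen.refl)
        exact Or.inr ⟨p, t2, t', hts, h, hts', Or.inl hRg, hxp,
          fun _ => ⟨Or.inr (Or.inr (Or.inl hRs)), Or.inl hRg⟩⟩
      | @dup2c _ _ _ _ _ t2 _ h hE =>
        have hyo : y = XY.o := smile_mem_Exy.1 hE
        obtain ⟨t', hts', hRg⟩ :=
          extractSmile hsub (Or.inr rfl) (Relation.ReflTransGen.refl)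
        refine Or.inr ⟨p, t2, t', hts, h, hts', Or.inl hRg, hxp, fun hyb => ?_⟩
        rw [hyo] at hyb
        exact XY.noConfusion hyb
      | @dup3a _ _ _ _ _ _ p₁ _ h =>
        have hW : Rg L x y u p₁ := WSP (RI_Wg_mem hsub)
        refine ih (Or.inr rfl) (hts.trans (Relation.ReflTransGen.single h))
          (fun _ => Or.inl hW) (Or.inr ⟨p, hts, h, hxp⟩)
      | @dup3c _ _ _ _ _ _ p₁ _ h hE =>
        have hxo : x = XY.o := frown_mem_Exy.1 hE
        have hxcontra : ∀ {P : Prop}, (x = XY.b → P) := by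
          intro P hxb
          rw [hxo] at hxb
          exact XY.noConfusion hxb
        refine ih (Or.inr rfl) (hts.trans (Relation.ReflTransGen.single h))
          hxcontra (Or.inr ⟨p, hts, h, hxcontra⟩)
    · subst heq
      exact hD.elim
  | @sp c hD h ih =>
    intro u V b u'' p r hshape v₀ hts hxp hpred
    rcases hshape with heq | heq
    · subst heq
      exact absurd trivial hD
    · subst heq
      have hmv : GMv L x y (GConf.sp (u, V) (some (b, u'')) (some (p, Face.frown)) r)
          (GConf.dup (u, V) (some (b, u'')) (some (p, Face.frown)) Rw.star) :=
        GMove.sp1 (by simp)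
      refine ih _ hmv ?_ (Or.inl rfl) hts hxp hpred
      rintro ⟨hrw, _⟩
      exact Rw.noConfusion hrw


/-- Extraction of the divergence response. -/
lemma extractED {f : ℕ → S} (hdiv : ∀ i, L.TauStep (f i) (f (i + 1))) {v : S}
    {c : GConf S A}
    (hri : RI GConf.dupOwned (GMv L x y) GConf.reward (Wg L x y) c) :
    ∀ {k : ℕ} {U V m : S} {fc : Face} {r : Rw},
      (c = GConf.sp (f k, v) none none r ∨
       ((c = GConf.dup (U, V) (some (L.tau, f (k + 1))) (some (m, fc)) r ∨
         c = GConf.sp (U, V) (some (L.tau, f (k + 1))) (some (m, fc)) r) ∧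
        L.TauStar v m)) →
      ∃ v' k', L.TauPlus v v' ∧ Rg L x y (f k') v' := by
  induction hri with
  | @dupZ c d hD hM hr hz =>
    intro k U V m fc r hshape
    rcases hshape with heq | ⟨heq | heq, hts⟩
    · subst heq; exact hD.elim
    · subst heq
      cases hM with
      | dup1 => exact absurd hr (by intro hrr; exact Rw.noConfusion hrr)
      | dup2a h => exact absurd hr (by intro hrr; exact Rw.noConfusion hrr)
      | dup2c h hE => exact absurd hr (by intro hrr; exact Rw.noConfusion hrr)
      | dup3a h => exact absurd hr (by intro hrr; exact Rw.noConfusion hrr)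
      | dup3c h hE => exact absurd hr (by intro hrr; exact Rw.noConfusion hrr)
      | @dup2b _ _ _ _ _ t2 _ h =>
        exact ⟨t2, k + 1, Relation.TransGen.tail' hts h, Wg_sp_reward hz⟩
      | @dup3b _ _ _ _ _ m₁ _ h =>
        exact ⟨m₁, k + 1, Relation.TransGen.tail' hts h, Wg_sp_reward hz⟩
    · subst heq; exact hD.elim
  | @dupR c d hD hM hsub ih =>
    intro k U V m fc r hshape
    rcases hshape with heq | ⟨heq | heq, hts⟩
    · subst heq; exact hD.elim
    · subst heq
      cases hM with
      | dup1 =>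
        rcases Relation.ReflTransGen.cases_head hts with heqv | ⟨m', hstep, hrest⟩
        · -- m = v : recurse at the † configuration for k+1
          exact ih (k := k + 1) (U := U) (V := V) (m := m) (fc := fc)
            (Or.inl (by rw [heqv]))
        · -- v ↠⁺ m : done
          exact ⟨m, k + 1, Relation.TransGen.head' hstep hrest,
            Wg_sp_reward (RI_Wg_mem hsub)⟩
      | @dup2b _ _ _ _ _ t2 _ h =>
        exact ⟨t2, k + 1, Relation.TransGen.tail' hts h,
          Wg_sp_reward (RI_Wg_mem hsub)⟩
      | @dup3b _ _ _ _ _ m₁ _ h =>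
        exact ⟨m₁, k + 1, Relation.TransGen.tail' hts h,
          Wg_sp_reward (RI_Wg_mem hsub)⟩
      | @dup2a _ _ _ _ _ t2 _ h =>
        exact ih (Or.inr ⟨Or.inr rfl, hts.trans (Relation.ReflTransGen.single h)⟩)
      | @dup2c _ _ _ _ _ t2 _ h hE =>
        exact ih (Or.inr ⟨Or.inr rfl, hts.trans (Relation.ReflTransGen.single h)⟩)
      | @dup3a _ _ _ _ _ _ m₁ _ h =>
        exact ih (Or.inr ⟨Or.inr rfl, hts.trans (Relation.ReflTransGen.single h)⟩)
      | @dup3c _ _ _ _ _ _ m₁ _ h hE =>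
        exact ih (Or.inr ⟨Or.inr rfl, hts.trans (Relation.ReflTransGen.single h)⟩)
    · subst heq; exact hD.elim
  | @sp c hD h ih =>
    intro k U V m fc r hshape
    rcases hshape with heq | ⟨heq | heq, hts⟩
    · subst heq
      have hmv : GMv L x y (GConf.sp (f k, v) none none r)
          (GConf.dup (f k, v) (some (L.tau, f (k + 1))) (some (v, Face.frown))
            Rw.star) :=
        GMove.sp2a (hdiv k)
      refine ih _ hmv ?_ (Or.inr ⟨Or.inl rfl, Relation.ReflTransGen.refl⟩)
      rintro ⟨hrw, _⟩
      exact Rw.noConfusion hrw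
    · subst heq
      exact absurd trivial hD
    · subst heq
      have hmv : GMv L x y
          (GConf.sp (U, V) (some (L.tau, f (k + 1))) (some (m, fc)) r)
          (GConf.dup (U, V) (some (L.tau, f (k + 1))) (some (m, fc)) Rw.star) :=
        GMove.sp1 (by simp)
      refine ih _ hmv ?_ (Or.inr ⟨Or.inl rfl, hts⟩)
      rintro ⟨hrw, _⟩
      exact Rw.noConfusion hrw


lemma FrRes_to_transfer {s t : S} {a : A} {s' : S} (hRst : Rext L x y s t)
    (h : FrRes L x y s t a s') :
    (a = L.tau ∧ Rext L x y s' t) ∨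
    ∃ t1 t2 t', L.GenTauStar x (Rext L x y) s t t1 ∧ L.Trans t1 a t2 ∧
      L.GenTauStar y (Rext L x y) s' t2 t' ∧ Rext L x y s' t' := by
  rcases h with ⟨ha, h2⟩ | ⟨t1, t2, t', h1, h2, h3, h4, hx, hy⟩
  · exact Or.inl ⟨ha, h2⟩
  · exact Or.inr ⟨t1, t2, t', ⟨h1, fun hxb => ⟨hRst, hx hxb⟩⟩, h2,
      ⟨h3, fun hyb => hy hyb⟩, h4⟩

lemma Rext_transfer {s t : S} {a : A} {s' : S} (hR : Rext L x y s t)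
    (htr : L.Trans s a s') :
    (a = L.tau ∧ Rext L x y s' t) ∨
    ∃ t1 t2 t', L.GenTauStar x (Rext L x y) s t t1 ∧ L.Trans t1 a t2 ∧
      L.GenTauStar y (Rext L x y) s' t2 t' ∧ Rext L x y s' t' := by
  rcases hR with h | h | h | h
  · -- Rg s t
    have hD := spW_move h (fun hh => hh) (GMove.sp2a htr)
    exact FrRes_to_transfer (Or.inl h)
      (extractFrown hD (Or.inl rfl) Relation.ReflTransGen.refl
        (fun _ => Or.inl h) (Or.inl rfl))
  · -- Rg t s
    have hD := spW_move h (fun hh => hh) (GMove.sp3 htr)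
    exact FrRes_to_transfer (Or.inr (Or.inl h))
      (extractFrown hD (Or.inl rfl) Relation.ReflTransGen.refl
        (fun _ => Or.inr (Or.inl h)) (Or.inl rfl))
  · -- Rs s t
    obtain ⟨a₀, r₀, hC⟩ := h
    have hRst : Rext L x y s t := Or.inr (Or.inr (Or.inl ⟨a₀, r₀, hC⟩))
    by_cases hch : (a, s') = (a₀, s)
    · have ha : a = a₀ := (Prod.mk.injEq _ _ _ _ ▸ hch).1
      have hs : s' = s := (Prod.mk.injEq _ _ _ _ ▸ hch).2
      by_cases hat : a = L.tau
      · exact Or.inl ⟨hat, hs ▸ hRst⟩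
      · have hD₁ := spW_move hC (fun hh => hh)
          (GMove.sp1 (c := some (a₀, s)) (by simp))
        obtain ⟨tst, htst, hRgst⟩ :=
          extractSmile hD₁ (Or.inl rfl) (Relation.ReflTransGen.refl)
        have hD₂ := spW_move hRgst (fun hh => hh) (GMove.sp2a htr)
        have hres := extractFrown hD₂ (Or.inl rfl) Relation.ReflTransGen.refl
          (fun _ => Or.inl hRgst) (Or.inl rfl)
        rcases hres with ⟨hat', _⟩ | ⟨w1, w2, w3, h1, h2, h3, h4, hx, hy⟩
        · exact absurd hat' hat
        · exact Or.inr ⟨w1, w2, w3, ⟨htst.trans h1, fun hxb => ⟨hRst, hx hxb⟩⟩,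
            h2, ⟨h3, fun hyb => hy hyb⟩, h4⟩
    · have hD := spW_move hC (fun hh => hh)
        (GMove.sp2b htr (by
          intro hcc
          injection hcc with h1
          exact hch h1.symm))
      exact FrRes_to_transfer hRst
        (extractFrown hD (Or.inl rfl) Relation.ReflTransGen.refl
          (fun _ => hRst) (Or.inl rfl))
  · -- Rs t s
    obtain ⟨a₀, r₀, hC⟩ := h
    have hRst : Rext L x y s t := Or.inr (Or.inr (Or.inr ⟨a₀, r₀, hC⟩))
    have hD := spW_move hC (fun hh => hh) (GMove.sp3 htr)
    exact FrRes_to_transfer hRst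
      (extractFrown hD (Or.inl rfl) Relation.ReflTransGen.refl
        (fun _ => hRst) (Or.inl rfl))

lemma Rext_div : DivCond L (Rext L x y) := by
  intro s t hR f hf0 hdiv
  have hstep0 : L.Trans s L.tau (f 1) := by
    have := hdiv 0
    rw [hf0] at this
    exact this
  have hgoal : (∃ v' k', L.TauPlus t v' ∧ Rg L x y (f k') v') →
      ∃ t' k, L.TauPlus t t' ∧ Rext L x y (f k) t' := by
    rintro ⟨v', k', h1, h2⟩
    exact ⟨v', k', h1, Or.inl h2⟩
  rcases hR with h | h | h | h
  · refine hgoal (extractED hdiv (winSet_mem_RI h) (k := 0) (U := s) (V := t)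
      (m := t) (fc := Face.frown) (Or.inl (by rw [hf0])))
  · have hD := spW_move h (fun hh => hh) (GMove.sp3 hstep0)
    exact hgoal (extractED hdiv hD (k := 0)
      (Or.inr ⟨Or.inl rfl, Relation.ReflTransGen.refl⟩))
  · obtain ⟨a₀, r₀, hC⟩ := h
    by_cases hch : (L.tau, f 1) = (a₀, s)
    · have hD := spW_move hC (fun hh => hh)
        (GMove.sp1 (c := some (a₀, s)) (by simp))
      have hD' : RI GConf.dupOwned (GMv L x y) GConf.reward (Wg L x y)
          (GConf.dup (s, t) (some (L.tau, f (0 + 1))) (some (t, Face.smile))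
            Rw.star) := by
        rw [show ((L.tau, f (0 + 1)) : A × S) = (a₀, s) from hch]
        exact hD
      exact hgoal (extractED hdiv hD' (k := 0)
        (Or.inr ⟨Or.inl rfl, Relation.ReflTransGen.refl⟩))
    · have hD := spW_move hC (fun hh => hh)
        (GMove.sp2b hstep0 (by
          intro hcc
          injection hcc with h1
          exact hch h1.symm))
      exact hgoal (extractED hdiv hD (k := 0)
        (Or.inr ⟨Or.inl rfl, Relation.ReflTransGen.refl⟩))
  · obtain ⟨a₀, r₀, hC⟩ := h
    have hD := spW_move hC (fun hh => hh) (GMove.sp3 hstep0)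
    exact hgoal (extractED hdiv hD (k := 0)
      (Or.inr ⟨Or.inl rfl, Relation.ReflTransGen.refl⟩))

/-- Completeness: Duplicator winning the gbed game implies the relation. -/
theorem gbedEquiv_to_genBisimilarED {s t : S} (h : L.gbedEquiv (Exy x y) s t) :
    L.GenBisimilarED x y s t := by
  have hW : GConf.sp (s, t) none none Rw.star ∈ Wg L x y := dupWins_winSet h
  refine ⟨Rext L x y, ⟨⟨fun _ _ hh => Rext_symm hh, ?_⟩, Rext_div⟩, Or.inl hW⟩
  intro s' t' a s'' hR htr
  exact Rext_transfer hR htr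

end GameComplete









/-- Game characterisation of generic bisimilarity with explicit
divergence: `s ≈ed_{(x,y)} t` iff `s ≡ed_{E(x,y)} t`. -/
theorem genBisimilarED_iff_gbedEquiv {S : Type u} {A : Type v} (L : LTS S A)
    (x y : XY) (s t : S) :
    L.GenBisimilarED x y s t ↔ L.gbedEquiv (Exy x y) s t := by
  constructor
  · intro h
    exact Bm_gbedEquiv (genBisimilarED_iff_Bm.1 h)
  · intro h
    exact gbedEquiv_to_genBisimilarED h

end GamesBisim
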